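/- arXiv:1102.2797 — 15 statements merged into one kernel-verified Lean document; each statement's English description precedes it below -/
import Mathlib

section
/- Let L be an n × N matrix over F and let i ∈ {1,…,m}. If there exists a vector u ∈ F^n with u ⊲ X_i and u + e_{f(i)} ∈ C(L), then receiver R_i can recover x_{f(i)}; that is, for all x, x' ∈ F^n with xL = x'L and x_j = x'_j for all j ∈ X_i, one has x_{f(i)} = x'_{f(i)}. -/
/-- If there exists `u ⊲ X i` with `u + e_{f i} ∈ C(L)`, then receiver `R i`
can recover `x (f i)` from the broadcast `x * L` and its side information. -/
theorem stmt_0 {F : Type} [Field F] {m n N : ℕ}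
    (X : Fin m → Set (Fin n)) (f : Fin m → Fin n) (hf : ∀ i, f i ∉ X i)
    (L : Matrix (Fin n) (Fin N) F) (i : Fin m)
    (u : Fin n → F) (hu : ∀ j, u j ≠ 0 → j ∈ X i)
    (huL : u + Pi.single (f i) (1 : F) ∈
      Submodule.span F (Set.range fun c : Fin N => fun r : Fin n => L r c)) :
    ∀ x x' : Fin n → F, Matrix.vecMul x L = Matrix.vecMul x' L →
      (∀ j ∈ X i, x j = x' j) → x (f i) = x' (f i) := by
  intro x x' hL hX
  set d : Fin n → F := x - x' with hd
  -- d is orthogonal to every vector in the span of columns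
  have hcol : ∀ w ∈ Submodule.span F
      (Set.range fun c : Fin N => fun r : Fin n => L r c),
      ∑ j, d j * w j = 0 := by
    intro w hw
    induction hw using Submodule.span_induction with
    | mem w hw =>
      obtain ⟨c, rfl⟩ := hw
      have : Matrix.vecMul d L c = 0 := by
        have : Matrix.vecMul d L = Matrix.vecMul x L - Matrix.vecMul x' L := by
          simp [hd, Matrix.sub_vecMul]
        rw [this, hL, sub_self]; rfl
      simpa [Matrix.vecMul, dotProduct] using this
    | zero => simp
    | add w₁ w₂ _ _ h1 h2 => simp [mul_add, Finset.sum_add_distrib, h1, h2]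
    | smul a w _ h =>
      simp only [Pi.smul_apply, smul_eq_mul]
      rw [show ∑ j, d j * (a * w j) = a * ∑ j, d j * w j by
        rw [Finset.mul_sum]; congr 1; ext j; ring, h, mul_zero]
  have h1 : ∑ j, d j * ((u + Pi.single (f i) (1 : F)) : Fin n → F) j = 0 := hcol _ huL
  have h2 : ∑ j, d j * u j = 0 := by
    apply Finset.sum_eq_zero
    intro j _
    by_cases h : u j = 0
    · simp [h]
    · have := hX j (hu j h)
      have : d j = 0 := by simp [hd, this]
      simp [this]
  have h3 : ∑ j, d j * (Pi.single (f i) (1 : F) : Fin n → F) j = 0 := by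
    have := h1
    simp only [Pi.add_apply, mul_add, Finset.sum_add_distrib, h2, zero_add] at this
    exact this
  have h4 : d (f i) = 0 := by
    rw [Finset.sum_eq_single (f i)] at h3
    · simpa using h3
    · intro j _ hj; simp [Pi.single_eq_of_ne hj]
    · simp
  have := sub_eq_zero.mp h4
  simpa [hd] using this
end

section
/- Let L be an n × N matrix over F, and let X_A, B, E be pairwise disjoint subsets of {1,…,n} with X_A ∪ B ∪ E = {1,…,n} and B nonempty. Suppose that for every u ∈ F^n with u ⊲ X_A and every family (α_i)_{i∈B} of elements of F, not all zero, the vector u + Σ_{i∈B} α_i e_i does not lie in C(L). Then: (1) for every i ∈ B, the row L_i of L lies in the span of the rows {L_j : j ∈ E}; and (2) for every w ∈ F^B the linear system y L_E = w L_B has at least one solution y ∈ F^E, where L_E and L_B denote the submatrices of L formed by the rows indexed by E and by B, respectively. -/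
/-!
If `w L` (with `w ⊲ B`) were outside the span of the rows indexed by `E`, a linear functional `z`
separating it from that span would give a vector `L z` of `C(L)` vanishing on `E`. By the cover
and `X_A ∩ B = ∅` it splits as `u + α` with `u ⊲ X_A`, `α ⊲ B`, and `α ≠ 0` because
`w · α = w · L z = (w L) · z ≠ 0`, contradicting the hypothesis. Part (1) is the case `w = e_i`.
-/

open Matrix Submodule Function

variable {R K m n : Type*}

theorem Matrix.mem_span_row_image_iff_exists_vecMul [Semiring R] [Fintype m]
    (L : Matrix m n R) (E : Set m) {x : n → R} :
    x ∈ span R (L.row '' E) ↔ ∃ y : m → R, support y ⊆ E ∧ y ᵥ* L = x := by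
  rw [Finsupp.mem_span_image_iff_linearCombination]
  constructor
  · rintro ⟨l, hl, rfl⟩
    refine ⟨l, fun j hj => hl (by simpa using hj), ?_⟩
    rw [Finsupp.linearCombination_apply, Finsupp.sum_fintype _ _ (by simp), vecMul_eq_sum]
    rfl
  · rintro ⟨y, hy, rfl⟩
    refine ⟨(Finsupp.linearEquivFunOnFinite R R m).symm y, ?_, ?_⟩
    · exact (Finsupp.mem_supported' R _).2 fun j hj => by_contra fun h => hj (hy h)
    · rw [Finsupp.linearCombination_eq_fintype_linearCombination_apply,
        Fintype.linearCombination_apply, vecMul_eq_sum]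
      rfl

theorem exists_dotProduct_eq_zero_and_ne_zero_of_notMem_span [Field K] [Fintype n]
    {S : Set (n → K)} {x : n → K} (hx : x ∉ span K S) :
    ∃ z : n → K, (∀ s ∈ S, s ⬝ᵥ z = 0) ∧ x ⬝ᵥ z ≠ 0 := by
  classical
  obtain ⟨f, hfx, hSf⟩ := exists_le_ker_of_notMem hx
  have hf : ∀ a, f a = a ⬝ᵥ (dotProductEquiv K n).symm f := fun a => by
    rw [dotProduct_comm, ← dotProductEquiv_apply_apply, LinearEquiv.apply_symm_apply]
  exact ⟨_, fun s hs => (hf s).symm.trans (hSf (subset_span hs)), (hf x) ▸ hfx⟩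

theorem vecMul_mem_span_row_image_of_forall_add_notMem_span_col [Field K] [Fintype m]
    [Fintype n] (L : Matrix m n K) {XA B E : Set m} (hAB : Disjoint XA B)
    (hcover : XA ∪ B ∪ E = Set.univ)
    (hsec : ∀ u : m → K, support u ⊆ XA → ∀ α : m → K, support α ⊆ B → α ≠ 0 →
      u + α ∉ span K (Set.range L.col))
    {w : m → K} (hw : support w ⊆ B) : w ᵥ* L ∈ span K (L.row '' E) := by
  by_contra hwL
  obtain ⟨z, hzE, hwLz⟩ := exists_dotProduct_eq_zero_and_ne_zero_of_notMem_span hwL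
  set v := L *ᵥ z
  have hv_col : v ∈ span K (Set.range L.col) := range_mulVecLin L ▸ LinearMap.mem_range_self _ z
  have hv_supp : support v ⊆ XA ∪ B := fun j hj => by
    have hjE : j ∉ E := fun hjE => hj (hzE _ ⟨j, hjE, rfl⟩)
    have hj' : j ∈ XA ∪ B ∪ E := hcover ▸ Set.mem_univ j
    exact hj'.resolve_right hjE
  have hv_split : XA.indicator v + B.indicator v = v := by
    conv_rhs => rw [← Set.indicator_eq_self.2 hv_supp, Set.indicator_union_of_disjoint hAB]
    rfl
  have hwv : w ⬝ᵥ B.indicator v = w ⬝ᵥ v := by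
    refine Finset.sum_congr rfl fun j _ => ?_
    by_cases hj : j ∈ B
    · rw [Set.indicator_of_mem hj]
    · rw [notMem_support.1 (fun h => hj (hw h)), zero_mul, zero_mul]
  refine hsec _ Set.support_indicator_subset _ Set.support_indicator_subset (fun h0 => ?_)
    (hv_split ▸ hv_col)
  rw [h0, dotProduct_zero, dotProduct_mulVec] at hwv
  exact hwLz hwv.symm

theorem stmt_1_general {F : Type} [Field F] {n N : ℕ}
    (L : Matrix (Fin n) (Fin N) F)
    (XA B E : Set (Fin n))
    (hAB : Disjoint XA B)
    (hcover : XA ∪ B ∪ E = Set.univ)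
    (hsec : ∀ u : Fin n → F, (∀ j, u j ≠ 0 → j ∈ XA) →
      ∀ α : Fin n → F, (∀ j, α j ≠ 0 → j ∈ B) → α ≠ 0 →
        u + α ∉ Submodule.span F (Set.range fun c : Fin N => fun r : Fin n => L r c)) :
    (∀ i ∈ B, L i ∈ Submodule.span F ((fun r : Fin n => L r) '' E)) ∧
    (∀ w : Fin n → F, (∀ j, w j ≠ 0 → j ∈ B) →
      ∃ y : Fin n → F, (∀ j, y j ≠ 0 → j ∈ E) ∧
        Matrix.vecMul y L = Matrix.vecMul w L) := by
  have hrow : ∀ w : Fin n → F, support w ⊆ B → w ᵥ* L ∈ span F (L.row '' E) :=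
    fun _ => vecMul_mem_span_row_image_of_forall_add_notMem_span_col L hAB hcover hsec
  refine ⟨fun i hi => ?_, fun w hw => ?_⟩
  · have := hrow (Pi.single i 1) (Pi.support_single_subset.trans (Set.singleton_subset_iff.2 hi))
    rwa [single_one_vecMul] at this
  · exact (mem_span_row_image_iff_exists_vecMul L E).1 (hrow w hw)

/-- If no vector `u + Σ_{i∈B} α_i e_i` (with `u ⊲ X_A`, the `α_i` not all zero)
lies in `C(L)`, then (1) every row `L_i`, `i ∈ B`, lies in the span of the rows indexed by `E`,
and (2) the system `y L_E = w L_B` is solvable for every `w`. -/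
theorem stmt_1 {F : Type} [Field F] {n N : ℕ}
    (L : Matrix (Fin n) (Fin N) F)
    (XA B E : Set (Fin n))
    (hAB : Disjoint XA B) (hAE : Disjoint XA E) (hBE : Disjoint B E)
    (hcover : XA ∪ B ∪ E = Set.univ) (hBne : B.Nonempty)
    (hsec : ∀ u : Fin n → F, (∀ j, u j ≠ 0 → j ∈ XA) →
      ∀ α : Fin n → F, (∀ j, α j ≠ 0 → j ∈ B) → α ≠ 0 →
        u + α ∉ Submodule.span F (Set.range fun c : Fin N => fun r : Fin n => L r c)) :
    (∀ i ∈ B, L i ∈ Submodule.span F ((fun r : Fin n => L r) '' E)) ∧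
    (∀ w : Fin n → F, (∀ j, w j ≠ 0 → j ∈ B) →
      ∃ y : Fin n → F, (∀ j, y j ≠ 0 → j ∈ E) ∧
        Matrix.vecMul y L = Matrix.vecMul w L) :=
  stmt_1_general L XA B E hAB hcover hsec
end

section
/- Let L be an n × N matrix over F, let X_A ⊊ {1,…,n}, and let B be a nonempty subset of {1,…,n}∖X_A. The adversary owning {x_j}_{j∈X_A} and observing xL has no information about x_B if and only if for every u ∈ F^n with u ⊲ X_A and every family (α_i)_{i∈B} of elements of F, not all zero, the vector u + Σ_{i∈B} α_i e_i does not lie in C(L). In particular, for each single index i ∈ {1,…,n}∖X_A, the adversary has no information about x_i if and only if u + e_i ∉ C(L) for every u ⊲ X_A. -/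
/-!
The adversary's view `(xL, x|_{X_A})` is shared exactly by the translates of `x` by
`K = {v | vL = 0, v|_{X_A} = 0}`, so, the messages being uniform, it learns nothing about `x_B`
iff restriction to `B` maps `K` onto `F^B`, i.e. iff `K + F^{Bᶜ}` is the whole space (here `F^E`
is the space of vectors supported in `E`). For the dot product, `K` is the orthogonal complement
of `C(L) + F^{X_A}` and `F^{Bᶜ}` that of `F^B`, so by duality this says
`(C(L) + F^{X_A}) ∩ F^B = 0`, which unfolds to the stated condition.
-/

open Matrix

/-- An adversary owning `{x_j}_{j ∈ XA}` and observing `x * L` has no information about `x_B`: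
for every message vector `x` and all prescribed values `g, g'` on `B`, the number of message
vectors consistent with the adversary's view and taking the values `g` on `B` equals the
number taking the values `g'` on `B`. -/
def noInfo {F : Type} [Field F] {n N : ℕ} (L : Matrix (Fin n) (Fin N) F)
    (XA B : Set (Fin n)) : Prop :=
  ∀ x g g' : Fin n → F,
    Nat.card {z : Fin n → F // Matrix.vecMul z L = Matrix.vecMul x L ∧
      (∀ j ∈ XA, z j = x j) ∧ (∀ j ∈ B, z j = g j)} =
    Nat.card {z : Fin n → F // Matrix.vecMul z L = Matrix.vecMul x L ∧
      (∀ j ∈ XA, z j = x j) ∧ (∀ j ∈ B, z j = g' j)}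

section Submodule

variable {R M : Type*} [Ring R] [AddCommGroup M] [Module R M]

theorem Submodule.mem_sup_iff_exists_add_mem {W U : Submodule R M} {x : M} :
    x ∈ W ⊔ U ↔ ∃ u ∈ U, u + x ∈ W := by
  refine ⟨fun hx => ?_,
    fun ⟨u, hu, hux⟩ => Submodule.mem_sup.2 ⟨u + x, hux, -u, neg_mem hu, by abel⟩⟩
  obtain ⟨w, hw, u, hu, rfl⟩ := Submodule.mem_sup.1 hx
  exact ⟨-u, neg_mem hu, by rwa [neg_add_cancel_comm_assoc]⟩

theorem Submodule.disjoint_sup_iff_forall_add_notMem {W U P : Submodule R M} :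
    Disjoint (W ⊔ U) P ↔ ∀ u ∈ U, ∀ α ∈ P, α ≠ 0 → u + α ∉ W := by
  simp only [Submodule.disjoint_def, Submodule.mem_sup_iff_exists_add_mem]
  constructor
  · exact fun h u hu α hα hα0 huα => hα0 (h α ⟨u, hu, huα⟩ hα)
  · rintro h α ⟨u, hu, huα⟩ hα
    by_contra hα0
    exact h u hu α hα hα0 huα

end Submodule

namespace LinearMap.BilinForm

variable {R M : Type*} [CommRing R] [AddCommGroup M] [Module R M] (B : LinearMap.BilinForm R M)

theorem mem_orthogonal_span_iff {S : Set M} {v : M} :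
    v ∈ B.orthogonal (Submodule.span R S) ↔ ∀ w ∈ S, B w v = 0 :=
  Submodule.span_le (p := LinearMap.ker (B.flip v))

theorem orthogonal_sup (S T : Submodule R M) :
    B.orthogonal (S ⊔ T) = B.orthogonal S ⊓ B.orthogonal T := by
  refine le_antisymm (le_inf (orthogonal_le le_sup_left) (orthogonal_le le_sup_right)) ?_
  rintro v ⟨hS, hT⟩ w hw
  obtain ⟨s, hs, t, ht, rfl⟩ := Submodule.mem_sup.1 hw
  rw [map_add, LinearMap.add_apply, hS s hs, hT t ht, add_zero]

theorem orthogonal_sup_orthogonal_eq_top_iff {K V : Type*} [Field K] [AddCommGroup V]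
    [Module K V] [FiniteDimensional K V] {B : LinearMap.BilinForm K V} (hB : B.Nondegenerate)
    (hB₀ : B.IsRefl) (S T : Submodule K V) : B.orthogonal S ⊔ B.orthogonal T = ⊤ ↔ S ⊓ T = ⊥ := by
  have hinj : Function.Injective B.orthogonal :=
    Function.LeftInverse.injective (orthogonal_orthogonal hB hB₀)
  rw [← hinj.eq_iff, orthogonal_sup, orthogonal_orthogonal hB hB₀,
    orthogonal_orthogonal hB hB₀, orthogonal_top_eq_bot hB]

end LinearMap.BilinForm

section SupportedIn

variable (R : Type*) {ι : Type*} [Semiring R]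

/-- `v ∈ supportedIn R E` is the paper's `v ⊲ E`. -/
def supportedIn (E : Set ι) : Submodule R (ι → R) where
  carrier := {v | Function.support v ⊆ E}
  zero_mem' := by simp
  add_mem' hu hv := (Function.support_add _ _).trans (Set.union_subset hu hv)
  smul_mem' c _ hv := (Function.support_const_smul_subset c _).trans hv

variable {R}

theorem mem_supportedIn_iff {E : Set ι} {v : ι → R} :
    v ∈ supportedIn R E ↔ ∀ j ∉ E, v j = 0 :=
  Function.support_subset_iff'

theorem supportedIn_singleton [DecidableEq ι] (i : ι) :
    supportedIn R {i} = R ∙ Pi.single i 1 := by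
  ext v
  rw [Submodule.mem_span_singleton]
  constructor
  · intro hv
    refine ⟨v i, funext fun j => ?_⟩
    by_cases hj : j = i
    · subst hj; simp
    · simp [Pi.single_eq_of_ne hj, mem_supportedIn_iff.1 hv j hj]
  · rintro ⟨c, rfl⟩
    exact (Function.support_const_smul_subset c _).trans Pi.support_single_subset

theorem sup_supportedIn_compl_eq_top_iff {R : Type*} [Ring R] (K : Submodule R (ι → R))
    (E : Set ι) :
    K ⊔ supportedIn R Eᶜ = ⊤ ↔ ∀ g : ι → R, ∃ v ∈ K, ∀ j ∈ E, v j = g j := by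
  refine Submodule.eq_top_iff'.trans
    (forall_congr' fun g => ⟨fun hg => ?_, fun ⟨v, hv, hvg⟩ => ?_⟩)
  · obtain ⟨v, hv, p, hp, rfl⟩ := Submodule.mem_sup.1 hg
    refine ⟨v, hv, fun j hj => ?_⟩
    rw [Pi.add_apply, mem_supportedIn_iff.1 hp j (Set.notMem_compl_iff.2 hj), add_zero]
  · refine Submodule.mem_sup.2
      ⟨v, hv, g - v, mem_supportedIn_iff.2 fun j hj => ?_, add_sub_cancel _ _⟩
    rw [Pi.sub_apply, hvg j (Set.notMem_compl_iff.1 hj), sub_self]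

end SupportedIn

section DotProduct

variable {R ι : Type*} [CommRing R] [Fintype ι]

theorem dotProductBilin_isRefl :
    LinearMap.BilinForm.IsRefl (dotProductBilin R R : LinearMap.BilinForm R (ι → R)) :=
  fun v w h => by rwa [dotProductBilin_apply_apply, dotProduct_comm] at h

theorem dotProductBilin_nondegenerate :
    (dotProductBilin R R : LinearMap.BilinForm R (ι → R)).Nondegenerate :=
  ⟨fun _ h => dotProduct_eq_zero_iff.1 h,
    fun v h => dotProduct_eq_zero_iff.1 fun w => (dotProduct_comm v w).trans (h w)⟩

theorem orthogonal_supportedIn [DecidableEq ι] (E : Set ι) :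
    LinearMap.BilinForm.orthogonal (dotProductBilin R R) (supportedIn R E) =
      supportedIn R Eᶜ := by
  ext v
  rw [LinearMap.BilinForm.mem_orthogonal_iff, mem_supportedIn_iff]
  refine ⟨fun h j hj => ?_, fun h w hw => Finset.sum_eq_zero fun j _ => ?_⟩
  · have hsingle : Pi.single j 1 ∈ supportedIn R E := by
      rw [Set.notMem_compl_iff] at hj
      exact Pi.support_single_subset.trans (Set.singleton_subset_iff.2 hj)
    simpa using h _ hsingle
  · by_cases hj : j ∈ E
    · rw [h j (Set.notMem_compl_iff.2 hj), mul_zero]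
    · rw [mem_supportedIn_iff.1 hw j hj, zero_mul]

theorem orthogonal_span_cols_eq_ker_vecMulLinear {κ : Type*} (L : Matrix ι κ R) :
    LinearMap.BilinForm.orthogonal (dotProductBilin R R)
        (Submodule.span R (Set.range fun c => fun r => L r c)) =
      LinearMap.ker L.vecMulLinear := by
  ext v
  rw [LinearMap.BilinForm.mem_orthogonal_span_iff, LinearMap.mem_ker, vecMulLinear_apply,
    Set.forall_mem_range, funext_iff]
  simp only [dotProductBilin_apply_apply, dotProduct_comm _ v]
  rfl

end DotProduct

theorem noInfo_iff_forall_exists_mem_ker {F : Type} [Field F] [Finite F] {n N : ℕ}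
    (L : Matrix (Fin n) (Fin N) F) (XA B : Set (Fin n)) :
    noInfo L XA B ↔ ∀ g : Fin n → F,
      ∃ v ∈ LinearMap.ker L.vecMulLinear ⊓ supportedIn F XAᶜ, ∀ j ∈ B, v j = g j := by
  refine ⟨fun h g => ?_, fun h x g g' => ?_⟩
  -- `Finite F` is needed here: `Nat.card` of an infinite type is `0`.
  · have hfiber : Nat.card {z : Fin n → F // z ᵥ* L = 0 ᵥ* L ∧
        (∀ j ∈ XA, z j = (0 : Fin n → F) j) ∧ ∀ j ∈ B, z j = g j} ≠ 0 := by
      rw [← h 0 0 g]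
      exact Nat.card_ne_zero.2 ⟨⟨⟨0, by simp⟩⟩, inferInstance⟩
    obtain ⟨⟨v, hvL, hvXA, hvB⟩⟩ := (Nat.card_ne_zero.1 hfiber).1
    refine ⟨v, ⟨by simpa using hvL, mem_supportedIn_iff.2 fun j hj => ?_⟩, hvB⟩
    exact hvXA j (Set.notMem_compl_iff.1 hj)
  · obtain ⟨v, hv, hvB⟩ := h (g' - g)
    obtain ⟨hvL, hvXA⟩ := Submodule.mem_inf.1 hv
    rw [LinearMap.mem_ker, vecMulLinear_apply] at hvL
    rw [mem_supportedIn_iff] at hvXA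
    refine Nat.card_congr (Equiv.subtypeEquiv (Equiv.addRight v) fun z => ?_)
    simp only [Equiv.coe_addRight, add_vecMul, hvL, add_zero, Pi.add_apply]
    refine and_congr_right'
      (and_congr (forall₂_congr fun j hj => ?_) (forall₂_congr fun j hj => ?_))
    · rw [hvXA j (Set.notMem_compl_iff.2 hj), add_zero]
    · rw [hvB j hj, Pi.sub_apply]
      constructor <;> intro h <;> linear_combination h

theorem noInfo_iff_disjoint {F : Type} [Field F] [Finite F] {n N : ℕ}
    (L : Matrix (Fin n) (Fin N) F) (XA B : Set (Fin n)) :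
    noInfo L XA B ↔
      Disjoint (Submodule.span F (Set.range fun c => fun r => L r c) ⊔ supportedIn F XA)
        (supportedIn F B) := by
  rw [noInfo_iff_forall_exists_mem_ker, ← sup_supportedIn_compl_eq_top_iff,
    ← orthogonal_span_cols_eq_ker_vecMulLinear, ← orthogonal_supportedIn XA,
    ← orthogonal_supportedIn B, ← LinearMap.BilinForm.orthogonal_sup,
    LinearMap.BilinForm.orthogonal_sup_orthogonal_eq_top_iff dotProductBilin_nondegenerate
      dotProductBilin_isRefl, disjoint_iff]

theorem stmt_2_general {F : Type} [Field F] [Fintype F] {n N : ℕ}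
    (L : Matrix (Fin n) (Fin N) F)
    (XA B : Set (Fin n)) :
    (noInfo L XA B ↔
      ∀ u : Fin n → F, (∀ j, u j ≠ 0 → j ∈ XA) →
        ∀ α : Fin n → F, (∀ j, α j ≠ 0 → j ∈ B) → α ≠ 0 →
          u + α ∉ Submodule.span F (Set.range fun c : Fin N => fun r : Fin n => L r c)) ∧
    (∀ i : Fin n, i ∉ XA →
      (noInfo L XA {i} ↔
        ∀ u : Fin n → F, (∀ j, u j ≠ 0 → j ∈ XA) →
          u + Pi.single i (1 : F) ∉
            Submodule.span F (Set.range fun c : Fin N => fun r : Fin n => L r c))) := by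
  refine ⟨(noInfo_iff_disjoint L XA B).trans Submodule.disjoint_sup_iff_forall_add_notMem,
    fun i _ => ?_⟩
  rw [noInfo_iff_disjoint, supportedIn_singleton, Submodule.disjoint_span_singleton'
    (Pi.single_eq_zero_iff.not.2 one_ne_zero), Submodule.mem_sup_iff_exists_add_mem, not_exists]
  exact forall_congr' fun u => not_and

/-- The adversary has no information about `x_B` iff no vector
`u + Σ_{i∈B} α_i e_i` (with `u ⊲ X_A` and the `α_i` not all zero) lies in `C(L)`;
in particular, for a single index `i ∉ X_A`, the adversary has no information about `x_i`
iff `u + e_i ∉ C(L)` for every `u ⊲ X_A`. -/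
theorem stmt_2 {F : Type} [Field F] [Fintype F] {n N : ℕ}
    (L : Matrix (Fin n) (Fin N) F)
    (XA B : Set (Fin n)) (hXA : XA ⊂ Set.univ) (hBne : B.Nonempty) (hB : B ⊆ XAᶜ) :
    (noInfo L XA B ↔
      ∀ u : Fin n → F, (∀ j, u j ≠ 0 → j ∈ XA) →
        ∀ α : Fin n → F, (∀ j, α j ≠ 0 → j ∈ B) → α ≠ 0 →
          u + α ∉ Submodule.span F (Set.range fun c : Fin N => fun r : Fin n => L r c)) ∧
    (∀ i : Fin n, i ∉ XA →
      (noInfo L XA {i} ↔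
        ∀ u : Fin n → F, (∀ j, u j ≠ 0 → j ∈ XA) →
          u + Pi.single i (1 : F) ∉
            Submodule.span F (Set.range fun c : Fin N => fun r : Fin n => L r c))) :=
  stmt_2_general L XA B
end

section
/- Let L be an n × N matrix over F and let i ∈ {1,…,m}. Receiver R_i can recover x_{f(i)} (i.e., for all x, x' ∈ F^n with xL = x'L and x_j = x'_j for all j ∈ X_i one has x_{f(i)} = x'_{f(i)}) if and only if there exists a vector u ∈ F^n with u ⊲ X_i and u + e_{f(i)} ∈ C(L). -/
/-- Receiver `R i` can recover `x (f i)` if and only if there exists a vector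
`u ⊲ X i` with `u + e_{f i} ∈ C(L)`. -/
theorem stmt_3 {F : Type} [Field F] {m n N : ℕ}
    (X : Fin m → Set (Fin n)) (f : Fin m → Fin n) (hf : ∀ i, f i ∉ X i)
    (L : Matrix (Fin n) (Fin N) F) (i : Fin m) :
    (∀ x x' : Fin n → F, Matrix.vecMul x L = Matrix.vecMul x' L →
      (∀ j ∈ X i, x j = x' j) → x (f i) = x' (f i)) ↔
    ∃ u : Fin n → F, (∀ j, u j ≠ 0 → j ∈ X i) ∧
      u + Pi.single (f i) (1 : F) ∈
        Submodule.span F (Set.range fun c : Fin N => fun r : Fin n => L r c) := by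
  set C : Submodule F (Fin n → F) :=
    Submodule.span F (Set.range fun c : Fin N => fun r : Fin n => L r c) with hC
  set W : Submodule F (Fin n → F) :=
    { carrier := {v | ∀ j ∉ X i, v j = 0}
      add_mem' := fun ha hb j hj => by simp [ha j hj, hb j hj]
      zero_mem' := fun j _ => rfl
      smul_mem' := fun c v hv j hj => by simp [hv j hj] } with hW
  constructor
  · intro hdec
    by_contra hne
    push_neg at hne
    have he : Pi.single (f i) (1 : F) ∉ C ⊔ W := by
      intro h
      rw [Submodule.mem_sup] at h
      obtain ⟨c, hc, w, hw, hcw⟩ := h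
      refine hne (-w) (fun j hj => ?_) ?_
      · by_contra hjX
        exact hj (by simp [hw j hjX])
      · have : -w + Pi.single (f i) 1 = c := by
          rw [← hcw]; ring
        rw [this]; exact hc
    have hq : (C ⊔ W).mkQ (Pi.single (f i) (1 : F)) ≠ 0 := by
      rw [Submodule.mkQ_apply]
      exact fun h => he ((Submodule.Quotient.mk_eq_zero _).1 h)
    have : ¬ ∀ ψ : Module.Dual F ((Fin n → F) ⧸ (C ⊔ W)),
        ψ ((C ⊔ W).mkQ (Pi.single (f i) (1 : F))) = 0 := by
      rw [Module.forall_dual_apply_eq_zero_iff]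
      exact hq
    push_neg at this
    obtain ⟨ψ, hψ⟩ := this
    set φ : Module.Dual F (Fin n → F) := ψ.comp (C ⊔ W).mkQ with hφ
    have hφS : ∀ v ∈ C ⊔ W, φ v = 0 := by
      intro v hv
      simp [hφ, (Submodule.Quotient.mk_eq_zero _).2 hv]
    set z : Fin n → F := fun j => φ (fun r => if j = r then 1 else 0) with hz
    have hφsum : ∀ v : Fin n → F, φ v = ∑ j, v j * z j := by
      intro v
      rw [LinearMap.pi_apply_eq_sum_univ φ v]
      simp [hz, smul_eq_mul]
    have hzL : Matrix.vecMul z L = 0 := by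
      funext c
      have hcol : (fun r : Fin n => L r c) ∈ C ⊔ W :=
        Submodule.mem_sup_left (Submodule.subset_span ⟨c, rfl⟩)
      have := hφS _ hcol
      rw [hφsum] at this
      simpa [Matrix.vecMul, dotProduct, mul_comm] using this
    have hzX : ∀ j ∈ X i, z j = 0 := by
      intro j hj
      have hmem : (fun r : Fin n => if j = r then (1:F) else 0) ∈ C ⊔ W := by
        refine Submodule.mem_sup_right (fun r hr => ?_)
        simp only [ite_eq_right_iff]
        intro h; subst h; exact absurd hj hr
      exact hφS _ hmem
    have := hdec z 0 (by simpa using hzL) (fun j hj => by simpa using hzX j hj)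
    simp only [Pi.zero_apply] at this
    apply hψ
    have : φ (fun r => if f i = r then (1:F) else 0) = 0 := this
    have heq : (Pi.single (f i) (1:F)) = fun r => if f i = r then (1:F) else 0 := by
      funext r
      simp [Pi.single_apply, eq_comm]
    rw [hφ] at this
    simpa [heq] using this
  · rintro ⟨u, hu, hc⟩ x x' hL hX
    rw [hC] at hc
    obtain ⟨a, ha⟩ := (Submodule.mem_span_range_iff_exists_fun F).1 hc
    set d : Fin n → F := fun j => x j - x' j with hd
    have hdL : ∀ c, ∑ j, d j * L j c = 0 := by
      intro c
      have := congrFun hL c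
      simp only [Matrix.vecMul, dotProduct] at this
      simp [hd, sub_mul, Finset.sum_sub_distrib, this]
    have key : ∑ j, d j * ((u + Pi.single (f i) 1 : Fin n → F) j) = 0 := by
      rw [← ha]
      simp only [Finset.sum_apply, Pi.smul_apply, smul_eq_mul, Finset.mul_sum]
      rw [Finset.sum_comm]
      apply Finset.sum_eq_zero
      intro c _
      simp_rw [mul_left_comm]
      rw [← Finset.mul_sum, hdL c, mul_zero]
    have hu0 : ∑ j, d j * u j = 0 := by
      apply Finset.sum_eq_zero
      intro j _
      by_cases hj : u j = 0
      · simp [hj]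
      · have := hX j (hu j hj)
        simp [hd, this]
    have hsingle : ∑ j, d j * ((Pi.single (f i) (1:F) : Fin n → F) j) = d (f i) := by
      rw [Finset.sum_eq_single (f i)]
      · simp
      · intro b _ hb; simp [Pi.single_apply, hb]
      · simp
    have : d (f i) = 0 := by
      have := key
      simp only [Pi.add_apply, mul_add, Finset.sum_add_distrib] at this
      rw [hu0, hsingle] at this
      simpa using this
    rw [hd] at this
    exact sub_eq_zero.mp this
end

section
/- An n × N matrix L over F corresponds to a linear (m,n,X,f)-IC if and only if for every i ∈ {1,…,m} there exists a vector u^{(i)} ∈ F^n with u^{(i)} ⊲ X_i and u^{(i)} + e_{f(i)} ∈ C(L). -/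
/-- `L` corresponds to a linear `(m,n,X,f)`-IC (every receiver can recover its
demanded message) if and only if for every `i` there exists `u⁽ⁱ⁾ ⊲ X i` with
`u⁽ⁱ⁾ + e_{f i} ∈ C(L)`. -/
theorem stmt_4 {F : Type} [Field F] {m n N : ℕ}
    (X : Fin m → Set (Fin n)) (f : Fin m → Fin n) (hf : ∀ i, f i ∉ X i)
    (L : Matrix (Fin n) (Fin N) F) :
    (∀ i : Fin m, ∀ x x' : Fin n → F, Matrix.vecMul x L = Matrix.vecMul x' L →
      (∀ j ∈ X i, x j = x' j) → x (f i) = x' (f i)) ↔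
    ∀ i : Fin m, ∃ u : Fin n → F, (∀ j, u j ≠ 0 → j ∈ X i) ∧
      u + Pi.single (f i) (1 : F) ∈
        Submodule.span F (Set.range fun c : Fin N => fun r : Fin n => L r c) := by
  set CL := Submodule.span F (Set.range fun c : Fin N => fun r : Fin n => L r c) with hCL
  constructor
  · intro h i
    set E := Submodule.span F ((fun j => Pi.single j (1 : F)) '' X i) with hE
    by_cases hmem : Pi.single (f i) (1 : F) ∈ CL ⊔ E
    · obtain ⟨v, hv, w, hw, hvw⟩ := Submodule.mem_sup.mp hmem
      have hsupp : ∀ w ∈ E, ∀ j, j ∉ X i → w j = 0 := by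
        intro w hw
        refine Submodule.span_induction ?_ ?_ ?_ ?_ hw
        · rintro _ ⟨j, hj, rfl⟩ k hk
          exact Pi.single_eq_of_ne (by rintro rfl; exact hk hj) 1
        · intro k _; rfl
        · intro a b _ _ ha hb k hk
          simp [Pi.add_apply, ha k hk, hb k hk]
        · intro c a _ ha k hk
          simp [Pi.smul_apply, ha k hk]
      refine ⟨-w, ?_, ?_⟩
      · intro j hj
        by_contra hjX
        exact hj (by simp [hsupp w hw j hjX])
      · have hv' : -w + Pi.single (f i) (1 : F) = v := by
          rw [← hvw]; abel
        rw [hv']; exact hv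
    · exfalso
      obtain ⟨φ, hφne, hφbot⟩ :=
        Submodule.exists_dual_map_eq_bot_of_notMem hmem inferInstance
      set z : Fin n → F := fun j => φ (Pi.single j 1) with hz
      have hφeq : ∀ x : Fin n → F, φ x = ∑ j, x j * z j := by
        intro x
        have hx : x = ∑ j, x j • (Pi.single j (1 : F) : Fin n → F) := by
          ext k
          rw [Finset.sum_apply]
          rw [Finset.sum_eq_single k]
          · simp
          · intro j _ hjne
            simp [Pi.single_eq_of_ne (Ne.symm hjne)]
          · simp
        conv_lhs => rw [hx]
        rw [map_sum]
        simp [smul_eq_mul, hz]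
      have hφW : ∀ w ∈ CL ⊔ E, φ w = 0 := by
        intro w hw
        have : φ w ∈ (CL ⊔ E).map φ := Submodule.mem_map_of_mem hw
        rwa [hφbot, Submodule.mem_bot] at this
      have hcol : ∀ c, Matrix.vecMul z L c = 0 := by
        intro c
        have hc : (fun r : Fin n => L r c) ∈ CL ⊔ E :=
          Submodule.mem_sup_left (Submodule.subset_span ⟨c, rfl⟩)
        have h0 := hφW _ hc
        rw [hφeq] at h0
        show dotProduct z (fun r => L r c) = 0
        rw [dotProduct]
        rw [← h0]
        exact Finset.sum_congr rfl fun j _ => mul_comm _ _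
      have hside : ∀ j ∈ X i, z j = 0 := by
        intro j hj
        exact hφW _ (Submodule.mem_sup_right (Submodule.subset_span ⟨j, hj, rfl⟩))
      have hfz : z (f i) ≠ 0 := by
        intro h0
        apply hφne
        rw [hφeq]
        rw [Finset.sum_eq_single (f i)]
        · simp [h0]
        · intro j _ hjne; simp [Pi.single_eq_of_ne hjne]
        · simp
      have := h i z 0 (by ext c; simp [hcol c, Matrix.zero_vecMul]) (by
        intro j hj; simp [hside j hj])
      exact hfz (by simpa using this)
  · intro h i x x' hL hX
    obtain ⟨u, hu, huC⟩ := h i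
    set d : Fin n → F := fun j => x j - x' j with hd
    have hdot : ∀ v ∈ CL, ∑ j, d j * v j = 0 := by
      intro v hv
      refine Submodule.span_induction ?_ ?_ ?_ ?_ hv
      · rintro _ ⟨c, rfl⟩
        have hc := congrFun hL c
        simp only [Matrix.vecMul, dotProduct] at hc
        simp [hd, sub_mul, Finset.sum_sub_distrib, hc]
      · simp
      · intro a b _ _ ha hb
        simp [mul_add, Finset.sum_add_distrib, ha, hb]
      · intro c a _ ha
        have : ∑ j, d j * (c • a) j = c * ∑ j, d j * a j := by
          rw [Finset.mul_sum]
          exact Finset.sum_congr rfl fun j _ => by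
            simp [smul_eq_mul]; ring
        rw [this, ha, mul_zero]
    have key := hdot _ huC
    have hu0 : ∀ j, d j * u j = 0 := by
      intro j
      by_cases hj : u j = 0
      · simp [hj]
      · simp [hd, hX j (hu j hj)]
    have key2 : (∑ j, d j * u j) + ∑ j, d j * (Pi.single (f i) (1 : F) : Fin n → F) j = 0 := by
      rw [← Finset.sum_add_distrib, ← key]
      exact Finset.sum_congr rfl fun j _ => by rw [Pi.add_apply, mul_add]
    simp only [hu0, Finset.sum_const_zero, zero_add] at key2
    rw [Finset.sum_eq_single (f i)] at key2
    · have : d (f i) = 0 := by simpa using key2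
      simpa [hd, sub_eq_zero] using this
    · intro j _ hjne; simp [Pi.single_eq_of_ne hjne]
    · simp
end

section
/- For every natural number N, there exists an n × N matrix L over F corresponding to a linear (m,n,X,f)-IC if and only if there exists a family of vectors u^{(i)} ∈ F^n, i ∈ {1,…,m}, with u^{(i)} ⊲ X_i for all i and dim span{u^{(i)} + e_{f(i)} : i ∈ {1,…,m}} ≤ N. Consequently, the length of an optimal (shortest) linear (m,n,X,f)-IC over F equals κ_q(m,n,X,f) := min{dim span{u^{(i)} + e_{f(i)} : i ∈ {1,…,m}} : u^{(i)} ∈ F^n, u^{(i)} ⊲ X_i for all i}. -/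
/-- `L` corresponds to a linear `(m,n,X,f)`-IC: every receiver can recover its demanded
message from the broadcast `x * L` together with its side information. -/
def IsIC {F : Type} [Field F] {m n N : ℕ} (X : Fin m → Set (Fin n)) (f : Fin m → Fin n)
    (L : Matrix (Fin n) (Fin N) F) : Prop :=
  ∀ i : Fin m, ∀ x x' : Fin n → F, Matrix.vecMul x L = Matrix.vecMul x' L →
    (∀ j ∈ X i, x j = x' j) → x (f i) = x' (f i)

/-!
Receiver `i` can recover `x (f i)` iff every `y` with `y ᵥ* L = 0` vanishing on `X i` vanishes
at `f i`, i.e. iff `e_{f i}` lies in the double orthogonal of `C(L) + span{e_j : j ∈ X i}`, which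
is that subspace itself; here `C(L)` is `LinearMap.range L.mulVecLin` and `span{e_j : j ∈ X i}`
is `Submodule.pi (X i)ᶜ ⊥`. So `L` is an IC iff each `e_{f i}` is `c_i - u_i` with `c_i ∈ C(L)` and
`u_i ⊲ X i`. The vectors `u_i + e_{f i}` then span a subspace of `C(L)`, of dimension at most `N`;
conversely any subspace of dimension at most `N` is `C(L)` for some `n × N` matrix `L`.
Hence the achievable lengths are exactly the upward closure of the achievable dimensions,
and the two infima agree.
-/

open Matrix Module

theorem Submodule.mem_sup_iff_exists_add_mem_s5 {R M : Type*} [Ring R] [AddCommGroup M] [Module R M]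
    {p q : Submodule R M} {v : M} : v ∈ p ⊔ q ↔ ∃ u ∈ q, u + v ∈ p := by
  rw [Submodule.mem_sup]
  constructor
  · rintro ⟨c, hc, w, hw, rfl⟩
    exact ⟨-w, q.neg_mem hw, by simpa using hc⟩
  · rintro ⟨u, hu, huv⟩
    exact ⟨u + v, huv, -u, q.neg_mem hu, by abel⟩

theorem Nat.sInf_eq_of_forall_mem_iff_exists_le {s t : Set ℕ}
    (h : ∀ N, N ∈ s ↔ ∃ k ∈ t, k ≤ N) : sInf s = sInf t := by
  rcases t.eq_empty_or_nonempty with rfl | ht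
  · have : s = ∅ := Set.eq_empty_of_forall_notMem fun N hN => by simpa using (h N).1 hN
    rw [this]
  have hs : sInf t ∈ s := (h _).2 ⟨_, Nat.sInf_mem ht, le_rfl⟩
  obtain ⟨k, hk, hks⟩ := (h _).1 (Nat.sInf_mem ⟨_, hs⟩)
  exact le_antisymm (Nat.sInf_le hs) ((Nat.sInf_le hk).trans hks)

section DotProduct

variable {R ι κ : Type*} [Fintype ι]

theorem vecMul_eq_zero_iff_forall_dotProduct_range [CommSemiring R] [Fintype κ]
    (L : Matrix ι κ R) (y : ι → R) :
    y ᵥ* L = 0 ↔ ∀ v ∈ LinearMap.range L.mulVecLin, y ⬝ᵥ v = 0 := by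
  simp [dotProduct_mulVec, dotProduct_eq_zero_iff]

theorem forall_mem_sup_dotProduct_eq_zero_iff [CommSemiring R] {p q : Submodule R (ι → R)}
    {y : ι → R} :
    (∀ w ∈ p ⊔ q, y ⬝ᵥ w = 0) ↔ (∀ w ∈ p, y ⬝ᵥ w = 0) ∧ ∀ w ∈ q, y ⬝ᵥ w = 0 := by
  refine ⟨fun h => ⟨fun w hw => h w (Submodule.mem_sup_left hw),
    fun w hw => h w (Submodule.mem_sup_right hw)⟩, ?_⟩
  rintro ⟨hp, hq⟩ w hw
  obtain ⟨a, ha, b, hb, rfl⟩ := Submodule.mem_sup.1 hw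
  rw [dotProduct_add, hp a ha, hq b hb, add_zero]

theorem forall_mem_pi_compl_bot_dotProduct_eq_zero_iff [CommSemiring R] [DecidableEq ι]
    (s : Set ι) (y : ι → R) :
    (∀ w ∈ Submodule.pi sᶜ (fun _ => (⊥ : Submodule R R)), y ⬝ᵥ w = 0) ↔ ∀ j ∈ s, y j = 0 := by
  constructor
  · intro h j hj
    have hmem : Pi.single j 1 ∈ Submodule.pi sᶜ (fun _ => (⊥ : Submodule R R)) := by
      intro k hk
      simp [show k ≠ j from fun hkj => hk (hkj ▸ hj)]
    simpa using h _ hmem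
  · intro h w hw
    refine Finset.sum_eq_zero fun j _ => ?_
    by_cases hj : j ∈ s
    · simp [h j hj]
    · simp [(Submodule.mem_bot R).1 (hw j hj)]

theorem mem_iff_forall_dotProduct_eq_zero [Field R] (W : Submodule R (ι → R)) (v : ι → R) :
    v ∈ W ↔ ∀ y : ι → R, (∀ w ∈ W, y ⬝ᵥ w = 0) → y ⬝ᵥ v = 0 := by
  classical
  rw [← Subspace.forall_mem_dualAnnihilator_apply_eq_zero_iff]
  simp only [Submodule.mem_dualAnnihilator]
  exact (dotProductEquiv R ι).surjective.forall

end DotProduct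

theorem exists_matrix_range_mulVecLin_eq {F ι : Type*} [Field F] [Fintype ι] [DecidableEq ι]
    {N : ℕ} (V : Submodule F (ι → F)) (hV : finrank F V ≤ N) :
    ∃ L : Matrix ι (Fin N) F, LinearMap.range L.mulVecLin = V := by
  let restrict : (Fin N → F) →ₗ[F] (Fin (finrank F V) → F) :=
    LinearMap.funLeft F F (Fin.castLE hV)
  let g := V.subtype ∘ₗ (finBasis F V).equivFun.symm.toLinearMap ∘ₗ restrict
  refine ⟨LinearMap.toMatrix' g, ?_⟩
  have hsurj : Function.Surjective ((finBasis F V).equivFun.symm.toLinearMap ∘ₗ restrict) :=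
    (finBasis F V).equivFun.symm.surjective.comp
      (LinearMap.funLeft_surjective_of_injective _ _ _ (Fin.castLE_injective hV))
  rw [← Matrix.toLin'_apply', Matrix.toLin'_toMatrix',
    LinearMap.range_comp_of_range_eq_top _ (LinearMap.range_eq_top.2 hsurj),
    Submodule.range_subtype]

section IndexCoding

variable {F : Type} [Field F] {m n N : ℕ} {X : Fin m → Set (Fin n)} {f : Fin m → Fin n}

theorem isIC_iff_forall_vecMul_eq_zero (L : Matrix (Fin n) (Fin N) F) :
    IsIC X f L ↔
      ∀ i, ∀ y : Fin n → F, y ᵥ* L = 0 → (∀ j ∈ X i, y j = 0) → y (f i) = 0 := by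
  refine ⟨fun h i y hy hX => h i y 0 (by rw [hy, zero_vecMul]) hX, fun h i x x' hL hX => ?_⟩
  have := h i (x - x') (by rw [sub_vecMul, hL, sub_self]) fun j hj => sub_eq_zero.2 (hX j hj)
  exact sub_eq_zero.1 this

theorem isIC_iff_single_mem_sup (L : Matrix (Fin n) (Fin N) F) :
    IsIC X f L ↔ ∀ i, Pi.single (f i) 1 ∈
      LinearMap.range L.mulVecLin ⊔ Submodule.pi (X i)ᶜ (fun _ => ⊥) := by
  simp only [isIC_iff_forall_vecMul_eq_zero, mem_iff_forall_dotProduct_eq_zero _ (Pi.single _ _),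
    forall_mem_sup_dotProduct_eq_zero_iff, forall_mem_pi_compl_bot_dotProduct_eq_zero_iff,
    ← vecMul_eq_zero_iff_forall_dotProduct_range, dotProduct_single, mul_one, and_imp]

theorem isIC_iff (L : Matrix (Fin n) (Fin N) F) :
    IsIC X f L ↔ ∀ i, ∃ u : Fin n → F, (∀ j, u j ≠ 0 → j ∈ X i) ∧
      u + Pi.single (f i) 1 ∈ LinearMap.range L.mulVecLin := by
  simp only [isIC_iff_single_mem_sup, Submodule.mem_sup_iff_exists_add_mem_s5, Submodule.mem_pi,
    Submodule.mem_bot, Set.mem_compl_iff, not_imp_comm]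

theorem exists_isIC_iff (X : Fin m → Set (Fin n)) (f : Fin m → Fin n) (N : ℕ) :
    (∃ L : Matrix (Fin n) (Fin N) F, IsIC X f L) ↔
      ∃ u : Fin m → Fin n → F, (∀ i, ∀ j, u i j ≠ 0 → j ∈ X i) ∧
        finrank F (Submodule.span F (Set.range fun i => u i + Pi.single (f i) 1)) ≤ N := by
  constructor
  · rintro ⟨L, hL⟩
    choose u hu hmem using (isIC_iff L).1 hL
    have hle : Submodule.span F (Set.range fun i => u i + Pi.single (f i) 1) ≤
        LinearMap.range L.mulVecLin :=
      Submodule.span_le.2 (Set.range_subset_iff.2 hmem)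
    refine ⟨u, hu, (Submodule.finrank_mono hle).trans ?_⟩
    simpa using LinearMap.finrank_range_le L.mulVecLin
  · rintro ⟨u, hu, hN⟩
    obtain ⟨L, hL⟩ := exists_matrix_range_mulVecLin_eq _ hN
    refine ⟨L, (isIC_iff L).2 fun i => ⟨u i, hu i, ?_⟩⟩
    exact hL ▸ Submodule.subset_span ⟨i, rfl⟩

end IndexCoding

theorem stmt_5_general {F : Type} [Field F] {m n : ℕ}
    (X : Fin m → Set (Fin n)) (f : Fin m → Fin n) :
    (∀ N : ℕ, (∃ L : Matrix (Fin n) (Fin N) F, IsIC X f L) ↔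
      ∃ u : Fin m → Fin n → F, (∀ i, ∀ j, u i j ≠ 0 → j ∈ X i) ∧
        Module.finrank F (Submodule.span F
          (Set.range fun i : Fin m => u i + Pi.single (f i) (1 : F))) ≤ N) ∧
    sInf {N : ℕ | ∃ L : Matrix (Fin n) (Fin N) F, IsIC X f L} =
      sInf {k : ℕ | ∃ u : Fin m → Fin n → F, (∀ i, ∀ j, u i j ≠ 0 → j ∈ X i) ∧
        Module.finrank F (Submodule.span F
          (Set.range fun i : Fin m => u i + Pi.single (f i) (1 : F))) = k} := by
  refine ⟨exists_isIC_iff X f, Nat.sInf_eq_of_forall_mem_iff_exists_le fun N => ?_⟩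
  simp only [Set.mem_ofPred_eq, exists_isIC_iff]
  exact ⟨fun ⟨u, hu, hN⟩ => ⟨_, ⟨u, hu, rfl⟩, hN⟩, fun ⟨_, ⟨u, hu, rfl⟩, hN⟩ => ⟨u, hu, hN⟩⟩

/-- For every `N` there exists a linear `(m,n,X,f)`-IC of length `N` iff there
is a choice of vectors `u⁽ⁱ⁾ ⊲ X i` with `dim span{u⁽ⁱ⁾ + e_{f i}} ≤ N`; consequently the
optimal length of a linear `(m,n,X,f)`-IC equals
`κ_q = min{dim span{u⁽ⁱ⁾ + e_{f i}} : u⁽ⁱ⁾ ⊲ X i}`. -/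
theorem stmt_5 {F : Type} [Field F] {m n : ℕ}
    (X : Fin m → Set (Fin n)) (f : Fin m → Fin n) (hf : ∀ i, f i ∉ X i) :
    (∀ N : ℕ, (∃ L : Matrix (Fin n) (Fin N) F, IsIC X f L) ↔
      ∃ u : Fin m → Fin n → F, (∀ i, ∀ j, u i j ≠ 0 → j ∈ X i) ∧
        Module.finrank F (Submodule.span F
          (Set.range fun i : Fin m => u i + Pi.single (f i) (1 : F))) ≤ N) ∧
    sInf {N : ℕ | ∃ L : Matrix (Fin n) (Fin N) F, IsIC X f L} =
      sInf {k : ℕ | ∃ u : Fin m → Fin n → F, (∀ i, ∀ j, u i j ≠ 0 → j ∈ X i) ∧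
        Module.finrank F (Submodule.span F
          (Set.range fun i : Fin m => u i + Pi.single (f i) (1 : F))) = k} :=
  stmt_5_general X f
end

section
/- Let L be an n × N matrix over F and let d ≥ 2 be such that every nonzero vector of C(L) has Hamming weight at least d. Let t be an integer with 0 ≤ t ≤ d − 2, let X_A ⊆ {1,…,n} with |X_A| = t, and let B ⊆ {1,…,n}∖X_A with |B| = d − 1 − t. Then the adversary owning {x_j}_{j∈X_A} and observing xL has no information about x_B. (That is, the linear index code based on L is (d−1−t)-block secure against all adversaries of strength t ≤ d − 2.) -/

lemma mem_of_perp_perp {F : Type} [Field F] {n : ℕ} (U : Submodule F (Fin n → F))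
    (v : Fin n → F)
    (hv : ∀ w : Fin n → F, (∀ u ∈ U, ∑ i, u i * w i = 0) → ∑ i, v i * w i = 0) :
    v ∈ U := by
  refine (Subspace.forall_mem_dualAnnihilator_apply_eq_zero_iff U v).mp ?_
  intro φ hφ
  rw [Submodule.mem_dualAnnihilator] at hφ
  have hrep : ∀ u : Fin n → F,
      φ u = ∑ i, u i * φ (fun j => if i = j then 1 else 0) := by
    intro u
    simpa [smul_eq_mul] using LinearMap.pi_apply_eq_sum_univ φ u
  rw [hrep]
  exact hv _ fun u hu => by rw [← hrep]; exact hφ u hu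

lemma exists_w {F : Type} [Field F] {n N : ℕ}
    (L : Matrix (Fin n) (Fin N) F) (d : ℕ) (hd : 2 ≤ d)
    (hdist : ∀ c ∈ Submodule.span F (Set.range fun j : Fin N => fun r : Fin n => L r j),
      c ≠ 0 → d ≤ Set.ncard (Function.support c))
    (t : ℕ) (ht : t + 2 ≤ d)
    (XA B : Set (Fin n)) (hXA : XA.ncard = t)
    (hB : B ⊆ XAᶜ) (hBcard : B.ncard = d - 1 - t) (g0 : Fin n → F) :
    ∃ w : Fin n → F, Matrix.vecMul w L = 0 ∧ (∀ j ∈ XA, w j = 0) ∧ ∀ j ∈ B, w j = g0 j := by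
  classical
  set C : Submodule F (Fin n → F) :=
    Submodule.span F (Set.range fun j : Fin N => fun r : Fin n => L r j) with hCdef
  set S : Submodule F (Fin n → F) :=
    Submodule.span F ((fun j => Pi.single j (1 : F)) '' XA) with hSdef
  set U : Submodule F (Fin n → F) := C ⊔ S with hUdef
  set W : Submodule F (Fin n → F) :=
    LinearMap.ker L.vecMulLinear ⊓ ⨅ j ∈ XA, LinearMap.ker (LinearMap.proj j) with hWdef
  have hWmem : ∀ w : Fin n → F,
      w ∈ W ↔ Matrix.vecMul w L = 0 ∧ ∀ j ∈ XA, w j = 0 := by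
    intro w
    simp [hWdef, Submodule.mem_inf, Submodule.mem_iInf, LinearMap.mem_ker,
      Matrix.vecMulLinear_apply, LinearMap.proj]
  have hWperp : ∀ w : Fin n → F, (∀ u ∈ U, ∑ i, u i * w i = 0) → w ∈ W := by
    intro w hw
    rw [hWmem]
    constructor
    · funext k
      have hcol : (fun r : Fin n => L r k) ∈ U := by
        refine le_sup_left (α := Submodule F (Fin n → F)) ?_
        exact Submodule.subset_span ⟨k, rfl⟩
      have := hw _ hcol
      simp only [Matrix.vecMul, dotProduct, Pi.zero_apply]
      rw [← this]
      exact Finset.sum_congr rfl fun i _ => mul_comm _ _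
    · intro j hj
      have hsing : Pi.single j (1 : F) ∈ U := by
        refine le_sup_right (α := Submodule F (Fin n → F)) ?_
        exact Submodule.subset_span ⟨j, hj, rfl⟩
      have := hw _ hsing
      rwa [Finset.sum_eq_single j (fun i _ hi => by simp [Pi.single_eq_of_ne hi])
        (by simp), Pi.single_eq_same, one_mul] at this
  have hSsupp : ∀ u ∈ S, ∀ i, i ∉ XA → u i = 0 := by
    intro u hu
    induction hu using Submodule.span_induction with
    | mem x hx =>
      obtain ⟨j, hj, rfl⟩ := hx
      intro i hi
      exact Pi.single_eq_of_ne (fun h => hi (by rw [h]; exact hj)) 1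
    | zero => intro i _; rfl
    | add a b _ _ ha hb => intro i hi; simp [ha i hi, hb i hi]
    | smul r a _ ha => intro i hi; simp [ha i hi]
  haveI : Fintype ↥B := Fintype.ofFinite _
  set Φ : (Fin n → F) →ₗ[F] (↥B → F) := LinearMap.funLeft F F (Subtype.val) with hΦdef
  have hsurj : Submodule.map Φ W = ⊤ := by
    by_contra hne
    obtain ⟨f, hf0, hker⟩ :=
      (Submodule.map Φ W).exists_le_ker_of_lt_top (lt_top_iff_ne_top.mpr hne)
    set v : Fin n → F := fun i => if h : i ∈ B then f (Pi.single ⟨i, h⟩ 1) else 0 with hvdef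
    have hfun : ∀ j : ↥B, (fun k : ↥B => if j = k then (1 : F) else 0) = Pi.single j 1 := by
      intro j; funext k; simp [Pi.single_apply, eq_comm]
    have hrep : ∀ y : ↥B → F, f y = ∑ j : ↥B, y j * f (Pi.single j 1) := by
      intro y
      have := LinearMap.pi_apply_eq_sum_univ f y
      simp only [smul_eq_mul] at this
      rw [this]
      exact Finset.sum_congr rfl fun j _ => by rw [hfun j]
    have hvB : ∀ j : ↥B, v (j : Fin n) = f (Pi.single j 1) := by
      rintro ⟨j, hj⟩; simp [hvdef, hj]
    have hvW : ∀ w ∈ W, ∑ i, v i * w i = 0 := by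
      intro w hw
      have h1 : ∑ j : ↥B, v ↑j * w ↑j = ∑ i, v i * w i := by
        rw [← Finset.sum_subtype B.toFinset (fun x => Set.mem_toFinset) (fun i => v i * w i)]
        refine Finset.sum_subset (Finset.subset_univ _) ?_
        intro i _ hi
        rw [Set.mem_toFinset] at hi
        simp [hvdef, hi]
      rw [← h1]
      have h2 : ∑ j : ↥B, v ↑j * w ↑j = f (Φ w) := by
        rw [hrep (Φ w)]
        refine Finset.sum_congr rfl fun j _ => ?_
        rw [hvB j, mul_comm]
        rfl
      rw [h2]
      exact hker (Submodule.mem_map_of_mem hw)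
    have hvU : v ∈ U := mem_of_perp_perp U v fun w hw => hvW w (hWperp w hw)
    have hvne : v ≠ 0 := by
      intro h0
      apply hf0
      apply LinearMap.ext
      intro y
      rw [hrep y]
      have : ∀ j : ↥B, f (Pi.single j 1) = 0 := by
        intro j; rw [← hvB j, h0]; rfl
      simp [this]
    obtain ⟨c, hc, u, hu, hcu⟩ := Submodule.mem_sup.mp hvU
    have hcne : c ≠ 0 := by
      rintro rfl
      rw [zero_add] at hcu
      apply hvne
      funext i
      by_cases hiB : i ∈ B
      · have hiXA : i ∉ XA := hB hiB
        rw [← hcu, hSsupp u hu i hiXA]; rfl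
      · simp [hvdef, hiB]
    have hsubp : Function.support c ⊆ B ∪ XA := by
      intro i hi
      by_contra hni
      rw [Set.mem_union] at hni
      push_neg at hni
      apply hi
      have hci : c i = v i - u i := eq_sub_of_add_eq (congrFun hcu i)
      have hvi : v i = 0 := dif_neg hni.1
      rw [hci, hvi, hSsupp u hu i hni.2, sub_zero]
    have hd1 := hdist c hc hcne
    have hle : (Function.support c).ncard ≤ B.ncard + XA.ncard :=
      le_trans (Set.ncard_le_ncard hsubp (Set.toFinite _)) (Set.ncard_union_le _ _)
    rw [hXA, hBcard] at hle
    omega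
  have hmem : (fun j : ↥B => g0 (j : Fin n)) ∈ Submodule.map Φ W := by
    rw [hsurj]; exact Submodule.mem_top
  obtain ⟨w, hwW, hΦw⟩ := Submodule.mem_map.mp hmem
  rw [hWmem] at hwW
  exact ⟨w, hwW.1, hwW.2, fun j hj => congrFun hΦw ⟨j, hj⟩⟩

/-- If every nonzero vector of `C(L)` has Hamming weight at least `d ≥ 2`,
`|X_A| = t ≤ d - 2` and `B ⊆ X_Aᶜ` with `|B| = d - 1 - t`, then the adversary owning
`x_{X_A}` has no information about `x_B`: the code is `(d-1-t)`-block secure against all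
adversaries of strength `t`. -/
theorem stmt_7 {F : Type} [Field F] [Fintype F] {n N : ℕ}
    (L : Matrix (Fin n) (Fin N) F) (d : ℕ) (hd : 2 ≤ d)
    (hdist : ∀ c ∈ Submodule.span F (Set.range fun j : Fin N => fun r : Fin n => L r j),
      c ≠ 0 → d ≤ Set.ncard (Function.support c))
    (t : ℕ) (ht : t + 2 ≤ d)
    (XA B : Set (Fin n)) (hXA : XA.ncard = t)
    (hB : B ⊆ XAᶜ) (hBcard : B.ncard = d - 1 - t) :
    noInfo L XA B := by
  intro x g g'
  obtain ⟨w, hw1, hw2, hw3⟩ := exists_w L d hd hdist t ht XA B hXA hB hBcard (g' - g)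
  refine Nat.card_congr ?_
  refine
    { toFun := fun z => ⟨z.1 + w, ?_, ?_, ?_⟩
      invFun := fun z => ⟨z.1 - w, ?_, ?_, ?_⟩
      left_inv := fun z => by ext1; simp
      right_inv := fun z => by ext1; simp }
  · rw [Matrix.add_vecMul, z.2.1, hw1, add_zero]
  · intro j hj; rw [Pi.add_apply, z.2.2.1 j hj, hw2 j hj, add_zero]
  · intro j hj
    rw [Pi.add_apply, z.2.2.2 j hj, hw3 j hj, Pi.sub_apply]
    ring
  · rw [Matrix.sub_vecMul, z.2.1, hw1, sub_zero]
  · intro j hj; rw [Pi.sub_apply, z.2.2.1 j hj, hw2 j hj, sub_zero]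
  · intro j hj
    rw [Pi.sub_apply, z.2.2.2 j hj, hw3 j hj, Pi.sub_apply]
    ring
end

section
/- Let L be an n × N matrix over F. If C(L) contains a nonzero codeword c of Hamming weight w, then there exist a set X_A ⊆ {1,…,n} with |X_A| = w − 1 and an index j ∈ {1,…,n}∖X_A such that an adversary owning {x_ℓ}_{ℓ∈X_A} and observing xL can determine x_j; that is, for all x, x' ∈ F^n with xL = x'L and x_ℓ = x'_ℓ for all ℓ ∈ X_A, one has x_j = x'_j. In particular, if C(L) has minimum distance d, the index code based on L is not weakly secure against at least one adversary of strength d − 1. -/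
/-! Agreement on the side information makes `x - x'` vanish on `supp c \ {j}`, and equal broadcasts make
`x - x'` orthogonal to every codeword `c ∈ C(L)`; so `(x j - x' j) * c j = 0` with `c j ≠ 0`.
Taking `X_A = supp c \ {j}` for any `j ∈ supp c` gives a set of size `wt c - 1`. -/

open Matrix Set Submodule

namespace Matrix

variable {m n R : Type*} [Fintype m] [Fintype n] [CommRing R]

theorem dotProduct_eq_zero_of_mem_span_col {L : Matrix m n R} {c : m → R}
    (hc : c ∈ span R (range L.col)) {u : m → R} (hu : u ᵥ* L = 0) : u ⬝ᵥ c = 0 := by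
  rw [← range_mulVecLin] at hc
  obtain ⟨a, rfl⟩ := hc
  rw [mulVecLin_apply, dotProduct_mulVec, hu, zero_dotProduct]

theorem dotProduct_eq_mul_of_eq_zero_on_support_sdiff {u c : m → R} {j : m}
    (hu : ∀ ℓ ∈ Function.support c \ {j}, u ℓ = 0) : u ⬝ᵥ c = u j * c j := by
  refine Finset.sum_eq_single j (fun ℓ _ hℓj => ?_) (fun hj => absurd (Finset.mem_univ j) hj)
  by_cases hcℓ : c ℓ = 0
  · rw [hcℓ, mul_zero]
  · rw [hu ℓ ⟨hcℓ, hℓj⟩, zero_mul]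

theorem eq_of_vecMul_eq_of_eq_on_support_sdiff [NoZeroDivisors R] {L : Matrix m n R} {c : m → R}
    (hc : c ∈ span R (range L.col)) {j : m} (hj : c j ≠ 0) {x x' : m → R}
    (hL : x ᵥ* L = x' ᵥ* L) (hx : ∀ ℓ ∈ Function.support c \ {j}, x ℓ = x' ℓ) :
    x j = x' j := by
  have horth : (x - x') ⬝ᵥ c = 0 :=
    dotProduct_eq_zero_of_mem_span_col hc (by rw [sub_vecMul, hL, sub_self])
  rw [dotProduct_eq_mul_of_eq_zero_on_support_sdiff (u := x - x') fun ℓ hℓ => sub_eq_zero.mpr (hx ℓ hℓ)]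
    at horth
  exact sub_eq_zero.mp ((mul_eq_zero.mp horth).resolve_right hj)

end Matrix

/-- If `C(L)` contains a nonzero codeword `c` of Hamming weight `w`, then there
is a side-information set `X_A` of size `w - 1` and an index `j ∉ X_A` such that an adversary
owning `x_{X_A}` and observing `x * L` can determine `x_j`; in particular the code is not
weakly secure against at least one adversary of strength `d - 1`, `d` the minimum distance. -/
theorem stmt_8 {F : Type} [Field F] {n N : ℕ}
    (L : Matrix (Fin n) (Fin N) F) (c : Fin n → F)
    (hc : c ∈ Submodule.span F (Set.range fun j : Fin N => fun r : Fin n => L r j))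
    (hc0 : c ≠ 0) (w : ℕ) (hw : Set.ncard (Function.support c) = w) :
    ∃ XA : Set (Fin n), XA.ncard = w - 1 ∧
      ∃ j : Fin n, j ∉ XA ∧
        ∀ x x' : Fin n → F, Matrix.vecMul x L = Matrix.vecMul x' L →
          (∀ ℓ ∈ XA, x ℓ = x' ℓ) → x j = x' j := by
  obtain ⟨j, hj⟩ := Function.ne_iff.mp hc0
  refine ⟨Function.support c \ {j}, ?_, j, fun hj' => hj'.2 rfl, fun x x' hL hx => ?_⟩
  · rw [ncard_sdiff_singleton_of_mem (Function.mem_support.mpr hj), hw]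
  · exact eq_of_vecMul_eq_of_eq_on_support_sdiff hc hj hL hx
end

section
/- Let L be an n × N matrix over F whose N columns are linearly independent, and let d be such that every nonzero vector of C(L) has Hamming weight at least d. Let X_A ⊆ {1,…,n} with |X_A| = t, where 0 ≤ t ≤ d − 1. Then N ≤ n − t, and for every x ∈ F^n the number of vectors z ∈ F^n satisfying zL = xL and z_j = x_j for all j ∈ X_A equals q^{n − t − N}. (Thus an adversary of strength t ≤ d − 1 can determine a list of exactly q^{n−t−N} vectors that contains the message vector x.) -/
open Matrix in

/-- If the `N` columns of `L` are linearly independent, every nonzero vector of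
`C(L)` has weight at least `d`, and `|X_A| = t ≤ d - 1`, then `N ≤ n - t` and for every `x`
the set of message vectors consistent with the adversary's view (the broadcast `x * L` and
the side information `x_{X_A}`) has size exactly `q^(n - t - N)`. -/
theorem stmt_9 {F : Type} [Field F] [Fintype F] {n N : ℕ}
    (L : Matrix (Fin n) (Fin N) F)
    (hind : LinearIndependent F fun j : Fin N => fun r : Fin n => L r j)
    (d : ℕ)
    (hdist : ∀ c ∈ Submodule.span F (Set.range fun j : Fin N => fun r : Fin n => L r j),
      c ≠ 0 → d ≤ Set.ncard (Function.support c))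
    (t : ℕ) (ht : t + 1 ≤ d) (XA : Set (Fin n)) (hXA : XA.ncard = t) :
    N + t ≤ n ∧
    ∀ x : Fin n → F,
      Nat.card {z : Fin n → F // Matrix.vecMul z L = Matrix.vecMul x L ∧
        ∀ j ∈ XA, z j = x j} = Fintype.card F ^ (n - t - N) := by
  classical
  haveI : Fintype XA := Fintype.ofFinite XA
  have hcardXA : Fintype.card XA = t := by
    rw [← Nat.card_eq_fintype_card, Nat.card_coe_set_eq, hXA]
  -- the combined matrix: columns of L together with indicator columns of XA
  set M : Matrix (Fin n) (Fin N ⊕ XA) F :=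
    Matrix.of fun r => Sum.elim (fun j => L r j) (fun k : XA => if r = (k : Fin n) then 1 else 0)
    with hM
  -- key: M has linearly independent columns, i.e. M.mulVecLin is injective
  have hker : ∀ c : Fin N ⊕ XA → F, M *ᵥ c = 0 → c = 0 := by
    intro c hc
    set v : Fin n → F := L *ᵥ (c ∘ Sum.inl) with hv
    have hMc : ∀ r : Fin n, v r
        + ∑ k : XA, (if r = (k : Fin n) then (1 : F) else 0) * c (Sum.inr k) = 0 := by
      intro r
      have := congrFun hc r
      simpa [M, Matrix.mulVec, dotProduct, Fintype.sum_sum_type, v,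
        Function.comp] using this
    have hsupp : ∀ r : Fin n, r ∉ XA → v r = 0 := by
      intro r hr
      have h0 : ∀ k : XA, (if r = (k : Fin n) then (1 : F) else 0) * c (Sum.inr k) = 0 := by
        intro k
        rw [if_neg, zero_mul]
        rintro rfl
        exact hr k.2
      have := hMc r
      rw [Finset.sum_congr rfl (fun k _ => h0 k)] at this
      simpa using this
    have hvmem : v ∈ Submodule.span F (Set.range fun j : Fin N => fun r : Fin n => L r j) := by
      have : v = ∑ j : Fin N, c (Sum.inl j) • (fun r : Fin n => L r j) := by
        funext r
        simp [v, Matrix.mulVec, dotProduct, Finset.sum_apply, mul_comm]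
      rw [this]
      exact Submodule.sum_mem _ fun j _ =>
        Submodule.smul_mem _ _ (Submodule.subset_span ⟨j, rfl⟩)
    have hv0 : v = 0 := by
      by_contra hv0
      have hd := hdist v hvmem hv0
      have hsub : Function.support v ⊆ XA := by
        intro r hr
        by_contra h
        exact hr (hsupp r h)
      have hle : (Function.support v).ncard ≤ XA.ncard :=
        Set.ncard_le_ncard hsub (Set.toFinite XA)
      omega
    have hinl : ∀ j : Fin N, c (Sum.inl j) = 0 := by
      intro j
      refine Fintype.linearIndependent_iff.mp hind (fun j => c (Sum.inl j)) ?_ j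
      have : ∀ r : Fin n, (∑ j : Fin N, c (Sum.inl j) • (fun r : Fin n => L r j)) r = 0 := by
        intro r
        have := congrFun hv0 r
        simpa [v, Matrix.mulVec, dotProduct, Finset.sum_apply, mul_comm] using this
      funext r
      simpa using this r
    have hinr : ∀ k : XA, c (Sum.inr k) = 0 := by
      intro k
      have := hMc (k : Fin n)
      have hvk : v (k : Fin n) = 0 := by rw [hv0]; rfl
      rw [hvk, zero_add] at this
      rw [Finset.sum_eq_single k (fun k' _ hk' => by
        rw [if_neg, zero_mul]
        intro h
        exact hk' (Subtype.ext h.symm)) (by simp)] at this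
      simpa using this
    funext j
    cases j with
    | inl j => exact hinl j
    | inr k => exact hinr k
  have hinj : LinearMap.ker M.mulVecLin = ⊥ := by
    rw [eq_bot_iff]
    intro c hc
    exact hker c (by simpa using hc)
  -- rank of M
  have hrank : M.rank = N + t := by
    have h1 := LinearMap.finrank_range_add_finrank_ker M.mulVecLin
    rw [hinj, finrank_bot, add_zero, Module.finrank_fintype_fun_eq_card,
      Fintype.card_sum, Fintype.card_fin, hcardXA] at h1
    exact h1
  have hrank_le : N + t ≤ n := by
    have := M.rank_le_card_height
    rw [hrank, Fintype.card_fin] at this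
    exact this
  refine ⟨hrank_le, fun x => ?_⟩
  -- the linear map z ↦ z ᵥ* M encodes the adversary's view
  have hΨrange : Module.finrank F (LinearMap.range M.vecMulLinear) = N + t := by
    rw [← Matrix.mulVecLin_transpose, ← Matrix.rank, Matrix.rank_transpose, hrank]
  have hΨker : Module.finrank F (LinearMap.ker M.vecMulLinear) = n - t - N := by
    have h1 := LinearMap.finrank_range_add_finrank_ker M.vecMulLinear
    rw [hΨrange, Module.finrank_fintype_fun_eq_card, Fintype.card_fin] at h1
    omega
  -- the consistency condition is exactly membership of z - x in the kernel
  have key : ∀ z : Fin n → F,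
      (Matrix.vecMul z L = Matrix.vecMul x L ∧ ∀ j ∈ XA, z j = x j) ↔
      (z - x) ∈ LinearMap.ker M.vecMulLinear := by
    intro z
    have hvec : ∀ w : Fin n → F, ∀ j, (w ᵥ* M) j
        = Sum.elim (w ᵥ* L) (fun k : XA => w (k : Fin n)) j := by
      intro w j
      cases j with
      | inl j => simp [M, Matrix.vecMul, dotProduct]
      | inr k =>
        simp only [M, Matrix.vecMul, dotProduct, Matrix.of_apply, Sum.elim_inr,
          mul_ite, mul_one, mul_zero]
        rw [Finset.sum_ite_eq' Finset.univ (k : Fin n) w]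
        simp
    rw [LinearMap.mem_ker, map_sub, sub_eq_zero]
    constructor
    · rintro ⟨h1, h2⟩
      funext j
      simp only [Matrix.vecMulLinear_apply]
      rw [hvec z j, hvec x j]
      cases j with
      | inl j => simp [h1]
      | inr k => simp [h2 (k : Fin n) k.2]
    · intro h
      constructor
      · funext j
        have := congrFun h (Sum.inl j)
        simp only [Matrix.vecMulLinear_apply] at this
        rw [hvec z _, hvec x _] at this
        simpa using this
      · intro j hj
        have := congrFun h (Sum.inr ⟨j, hj⟩)
        simp only [Matrix.vecMulLinear_apply] at this
        rw [hvec z _, hvec x _] at this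
        simpa using this
  -- bijection between the fiber and the kernel
  have e : {z : Fin n → F // Matrix.vecMul z L = Matrix.vecMul x L ∧
      ∀ j ∈ XA, z j = x j} ≃ LinearMap.ker M.vecMulLinear :=
    { toFun := fun z => ⟨z.1 - x, (key z.1).mp z.2⟩
      invFun := fun u => ⟨x + u.1, (key (x + u.1)).mpr (by simp)⟩
      left_inv := fun z => by ext; simp
      right_inv := fun u => by ext; simp }
  rw [Nat.card_congr e]
  haveI : Fintype (LinearMap.ker M.vecMulLinear) := Fintype.ofFinite _
  rw [Nat.card_eq_fintype_card, Module.card_eq_pow_finrank (K := F), hΨker]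
end

section
/- Let L be an n × N matrix over F and let d⊥ ≥ 1 be such that every nonzero vector u ∈ F^n with uL = 0 has Hamming weight at least d⊥ (i.e., the dual distance of C(L) is at least d⊥). Then for every set X_A ⊆ {1,…,n} with |X_A| ≥ n − d⊥ + 1 and every j ∈ {1,…,n}∖X_A, there exists a vector u ∈ F^n with u ⊲ X_A and u + e_j ∈ C(L). Consequently, the linear index code based on L is completely insecure against any adversary of strength at least n − d⊥ + 1: for all x, x' ∈ F^n with xL = x'L and x_ℓ = x'_ℓ for all ℓ ∈ X_A, one has x = x'. -/
/-- If every nonzero `u` with `u * L = 0` has weight at least `d⊥ ≥ 1` (the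
dual distance of `C(L)` is at least `d⊥`), then for every `X_A` with `|X_A| ≥ n - d⊥ + 1`
and every `j ∉ X_A` there is `u ⊲ X_A` with `u + e_j ∈ C(L)`; consequently the index code is
completely insecure against any adversary of strength at least `n - d⊥ + 1`. -/
theorem stmt_10 {F : Type} [Field F] {n N : ℕ}
    (L : Matrix (Fin n) (Fin N) F) (dperp : ℕ) (hd : 1 ≤ dperp)
    (hdual : ∀ u : Fin n → F, u ≠ 0 → Matrix.vecMul u L = 0 →
      dperp ≤ Set.ncard (Function.support u)) :
    ∀ XA : Set (Fin n), n - dperp + 1 ≤ XA.ncard →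
      ((∀ j : Fin n, j ∉ XA → ∃ u : Fin n → F, (∀ k, u k ≠ 0 → k ∈ XA) ∧
          u + Pi.single j (1 : F) ∈
            Submodule.span F (Set.range fun c : Fin N => fun r : Fin n => L r c)) ∧
       ∀ x x' : Fin n → F, Matrix.vecMul x L = Matrix.vecMul x' L →
         (∀ ℓ ∈ XA, x ℓ = x' ℓ) → x = x') := by
  intro XA hXA
  -- cardinality of the complement of XA is at most dperp - 1
  have hcompl : (XAᶜ : Set (Fin n)).ncard < dperp := by
    have h1 : XA.ncard + (XAᶜ : Set (Fin n)).ncard = n := by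
      rw [Set.ncard_add_ncard_compl]
      simp [Set.ncard_univ]
    omega
  -- key fact: any u supported in XAᶜ with uL = 0 is zero
  have key : ∀ u : Fin n → F, (∀ k ∈ XA, u k = 0) → Matrix.vecMul u L = 0 → u = 0 := by
    intro u hsupp hker
    by_contra hne
    have hsub : Function.support u ⊆ (XAᶜ : Set (Fin n)) := by
      intro k hk
      simp only [Set.mem_compl_iff]
      intro hkA
      exact hk (hsupp k hkA)
    have := hdual u hne hker
    have hle : (Function.support u).ncard ≤ (XAᶜ : Set (Fin n)).ncard :=
      Set.ncard_le_ncard hsub (Set.toFinite _)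
    omega
  constructor
  · intro j hj
    set C : Submodule F (Fin n → F) :=
      Submodule.span F (Set.range fun c : Fin N => fun r : Fin n => L r c) with hC
    set V : Submodule F (Fin n → F) :=
      { carrier := {u | ∀ k, u k ≠ 0 → k ∈ XA}
        add_mem' := by
          intro a b ha hb k hk
          by_contra hkA
          have ha' : a k = 0 := by by_contra h; exact hkA (ha k h)
          have hb' : b k = 0 := by by_contra h; exact hkA (hb k h)
          exact hk (by simp [ha', hb'])
        zero_mem' := by intro k hk; simp at hk
        smul_mem' := by
          intro c a ha k hk
          apply ha
          intro h
          simp [h] at hk } with hV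
    -- claim : e_j ∈ C ⊔ V
    have hmem : Pi.single j (1 : F) ∈ C ⊔ V := by
      by_contra hnm
      obtain ⟨f, hf0, hfbot⟩ :=
        Submodule.exists_dual_map_eq_bot_of_notMem hnm inferInstance
      set w : Fin n → F := fun k => f (Pi.single k 1) with hw
      have hfw : ∀ x : Fin n → F, f x = ∑ k, x k * w k := by
        intro x
        conv_lhs => rw [pi_eq_sum_univ x]
        rw [map_sum]
        refine Finset.sum_congr rfl fun k _ => ?_
        rw [map_smul, smul_eq_mul]
        congr 1
        simp only [hw]
        congr 1
        funext j'
        simp [Pi.single_apply, eq_comm]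
      have hzero : ∀ x ∈ C ⊔ V, f x = 0 := by
        intro x hx
        have : f x ∈ Submodule.map f (C ⊔ V) := Submodule.mem_map_of_mem hx
        rwa [hfbot, Submodule.mem_bot] at this
      -- w is supported off XA
      have hwsupp : ∀ k ∈ XA, w k = 0 := by
        intro k hk
        apply hzero
        refine Submodule.mem_sup_right ?_
        intro k' hk'
        have hkk : k' = k := by
          by_contra hne
          simp [Pi.single_apply, hne] at hk'
        rw [hkk]
        exact hk
      -- w L = 0
      have hwker : Matrix.vecMul w L = 0 := by
        funext c
        have hcol : (fun r : Fin n => L r c) ∈ C ⊔ V :=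
          Submodule.mem_sup_left (Submodule.subset_span ⟨c, rfl⟩)
        have := hzero _ hcol
        rw [hfw] at this
        simpa [Matrix.vecMul, dotProduct, mul_comm] using this
      have hwz : w = 0 := key w hwsupp hwker
      apply hf0
      rw [hfw, hwz]
      simp
    rw [Submodule.mem_sup] at hmem
    obtain ⟨y, hy, z, hz, hyz⟩ := hmem
    refine ⟨-z, fun k hk => hz k (by simpa using hk), ?_⟩
    have : -z + Pi.single j (1 : F) = y := by
      rw [← hyz]; abel
    rw [this]
    exact hy
  · intro x x' hL hagree
    have h1 : Matrix.vecMul (x - x') L = 0 := by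
      rw [Matrix.sub_vecMul, hL, sub_self]
    have h2 : ∀ k ∈ XA, (x - x') k = 0 := by
      intro k hk
      simp [hagree k hk]
    have := key (x - x') h2 h1
    exact sub_eq_zero.mp this
end

section
/- Let (m,n,X,Z,f) be an instance of the Index Coding with Side and Restricted Information problem, where Z_i ⊆ {1,…,n}∖X_i for each i ∈ {1,…,m}, and let L be an n × N matrix over F corresponding to a linear (m,n,X,f)-IC. Then the following are equivalent: (a) for every i ∈ {1,…,m} and every j ∈ Z_i, the receiver R_i, owning {x_ℓ}_{ℓ∈X_i} and observing xL, has no information about x_j; (b) C(L) ∩ F(X,Z) = ∅, where F(X,Z) := ∪_{i=1}^m {u + e_j : u ∈ F^n, u ⊲ X_i, j ∈ Z_i}. -/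
open Matrix

/-- The submodule of vectors supported on `S`. -/
def suppSub (F : Type) [Field F] {n : ℕ} (S : Set (Fin n)) : Submodule F (Fin n → F) where
  carrier := {u | ∀ k, u k ≠ 0 → k ∈ S}
  add_mem' := by
    intro a b ha hb k hk
    by_cases h : a k = 0
    · exact hb k (by simpa [Pi.add_apply, h] using hk)
    · exact ha k h
  zero_mem' := by intro k hk; simp at hk
  smul_mem' := by
    intro c u hu k hk
    apply hu k
    intro h
    simp [Pi.smul_apply, h] at hk

lemma dot_repr {F : Type} [Field F] {n : ℕ} (φ : Module.Dual F (Fin n → F)) (v : Fin n → F) :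
    φ v = (fun r => φ (Pi.single r 1)) ⬝ᵥ v := by
  conv_lhs => rw [← Finset.univ_sum_single v]
  rw [map_sum, dotProduct]
  refine Finset.sum_congr rfl fun r _ => ?_
  have h : Pi.single r (v r) = v r • (Pi.single r 1 : Fin n → F) := by
    funext k
    by_cases h : k = r
    · subst h; simp
    · simp [Pi.single_apply, h]
  rw [h, LinearMap.map_smul, smul_eq_mul, mul_comm]

lemma dot_span_zero {F : Type} [Field F] {n N : ℕ} (L : Matrix (Fin n) (Fin N) F)
    (w : Fin n → F) (h1 : Matrix.vecMul w L = 0) :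
    ∀ c ∈ Submodule.span F (Set.range fun c : Fin N => fun r : Fin n => L r c),
      w ⬝ᵥ c = 0 := by
  intro c hc
  induction hc using Submodule.span_induction with
  | mem x hx =>
    obtain ⟨col, rfl⟩ := hx
    have := congrFun h1 col
    simpa [Matrix.vecMul] using this
  | zero => simp
  | add x y _ _ hx hy => rw [dotProduct_add, hx, hy, add_zero]
  | smul a x _ hx => rw [dotProduct_smul, hx, smul_zero]

lemma dot_vanish {F : Type} [Field F] {n N : ℕ} (L : Matrix (Fin n) (Fin N) F)
    (Xi : Set (Fin n)) (w : Fin n → F)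
    (h1 : Matrix.vecMul w L = 0) (h2 : ∀ ℓ ∈ Xi, w ℓ = 0) :
    ∀ v ∈ (Submodule.span F (Set.range fun c : Fin N => fun r : Fin n => L r c) ⊔
      suppSub F Xi), w ⬝ᵥ v = 0 := by
  intro v hv
  obtain ⟨c, hc, u, hu, rfl⟩ := Submodule.mem_sup.mp hv
  rw [dotProduct_add, dot_span_zero L w h1 c hc, zero_add]
  apply Finset.sum_eq_zero
  intro r _
  by_cases h : u r = 0
  · simp [h]
  · rw [h2 r (hu r h), zero_mul]

/-- The key duality lemma. -/
lemma keyB {F : Type} [Field F] {n N : ℕ} (L : Matrix (Fin n) (Fin N) F)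
    (Xi : Set (Fin n)) (j : Fin n) :
    (∃ w : Fin n → F, Matrix.vecMul w L = 0 ∧ (∀ ℓ ∈ Xi, w ℓ = 0) ∧ w j ≠ 0) ↔
    Pi.single j (1 : F) ∉ (Submodule.span F (Set.range fun c : Fin N => fun r : Fin n => L r c) ⊔
      suppSub F Xi) := by
  constructor
  · rintro ⟨w, h1, h2, h3⟩ hmem
    have := dot_vanish L Xi w h1 h2 _ hmem
    rw [dotProduct_single, mul_one] at this
    exact h3 this
  · intro hnot
    by_contra hex
    push_neg at hex
    apply hnot
    rw [← Subspace.forall_mem_dualAnnihilator_apply_eq_zero_iff]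
    intro φ hφ
    rw [Submodule.mem_dualAnnihilator] at hφ
    set w : Fin n → F := fun r => φ (Pi.single r 1) with hw
    have hrep : ∀ v, φ v = w ⬝ᵥ v := fun v => dot_repr φ v
    have h1 : Matrix.vecMul w L = 0 := by
      funext c
      have hmem : (fun r : Fin n => L r c) ∈ (Submodule.span F
          (Set.range fun c : Fin N => fun r : Fin n => L r c) ⊔ suppSub F Xi) :=
        Submodule.mem_sup_left (Submodule.subset_span ⟨c, rfl⟩)
      have := hφ _ hmem
      rw [hrep] at this
      simpa [Matrix.vecMul] using this
    have h2 : ∀ ℓ ∈ Xi, w ℓ = 0 := by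
      intro ℓ hℓ
      have hmem : (Pi.single ℓ (1 : F)) ∈ (Submodule.span F
          (Set.range fun c : Fin N => fun r : Fin n => L r c) ⊔ suppSub F Xi) := by
        apply Submodule.mem_sup_right
        intro k hk
        have : k = ℓ := by
          by_contra hne
          simp [Pi.single_apply, hne] at hk
        exact this ▸ hℓ
      have := hφ _ hmem
      rw [hrep, dotProduct_single, mul_one] at this
      exact this
    have := hrep (Pi.single j 1)
    rw [dotProduct_single, mul_one] at this
    rw [this]
    exact hex w h1 h2

/-- The counting lemma. -/
lemma keyA {F : Type} [Field F] [Fintype F] {n N : ℕ} (L : Matrix (Fin n) (Fin N) F)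
    (Xi : Set (Fin n)) (j : Fin n) :
    (∀ x : Fin n → F, ∀ g g' : F,
      Nat.card {z : Fin n → F // Matrix.vecMul z L = Matrix.vecMul x L ∧
        (∀ ℓ ∈ Xi, z ℓ = x ℓ) ∧ z j = g} =
      Nat.card {z : Fin n → F // Matrix.vecMul z L = Matrix.vecMul x L ∧
        (∀ ℓ ∈ Xi, z ℓ = x ℓ) ∧ z j = g'}) ↔
    (∃ w : Fin n → F, Matrix.vecMul w L = 0 ∧ (∀ ℓ ∈ Xi, w ℓ = 0) ∧ w j ≠ 0) := by
  constructor
  · intro hcount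
    by_contra hno
    push_neg at hno
    have h01 := hcount 0 1 0
    haveI hempty : IsEmpty {z : Fin n → F //
        Matrix.vecMul z L = Matrix.vecMul (0 : Fin n → F) L ∧
        (∀ ℓ ∈ Xi, z ℓ = (0 : Fin n → F) ℓ) ∧ z j = (1 : F)} := by
      constructor
      rintro ⟨z, hz1, hz2, hz3⟩
      rw [Matrix.zero_vecMul] at hz1
      have := hno z hz1 (by simpa using hz2)
      rw [this] at hz3
      exact one_ne_zero hz3.symm
    haveI hne : Nonempty {z : Fin n → F //
        Matrix.vecMul z L = Matrix.vecMul (0 : Fin n → F) L ∧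
        (∀ ℓ ∈ Xi, z ℓ = (0 : Fin n → F) ℓ) ∧ z j = (0 : F)} :=
      ⟨⟨0, rfl, fun ℓ _ => rfl, rfl⟩⟩
    rw [Nat.card_of_isEmpty] at h01
    exact Nat.card_pos.ne' h01.symm
  · rintro ⟨w, hw1, hw2, hw3⟩ x g g'
    apply Nat.card_congr
    refine ⟨fun z => ⟨z.1 + ((g' - g) / w j) • w, ?_, ?_, ?_⟩,
            fun z => ⟨z.1 + ((g - g') / w j) • w, ?_, ?_, ?_⟩, ?_, ?_⟩
    · rw [Matrix.add_vecMul, Matrix.smul_vecMul, hw1, smul_zero, add_zero]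
      exact z.2.1
    · intro ℓ hℓ
      show z.1 ℓ + ((g' - g) / w j) * w ℓ = x ℓ
      rw [hw2 ℓ hℓ, mul_zero, add_zero]
      exact z.2.2.1 ℓ hℓ
    · show z.1 j + ((g' - g) / w j) * w j = g'
      rw [z.2.2.2, div_mul_cancel₀ _ hw3]
      ring
    · rw [Matrix.add_vecMul, Matrix.smul_vecMul, hw1, smul_zero, add_zero]
      exact z.2.1
    · intro ℓ hℓ
      show z.1 ℓ + ((g - g') / w j) * w ℓ = x ℓ
      rw [hw2 ℓ hℓ, mul_zero, add_zero]
      exact z.2.2.1 ℓ hℓ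
    · show z.1 j + ((g - g') / w j) * w j = g
      rw [z.2.2.2, div_mul_cancel₀ _ hw3]
      ring
    · rintro ⟨z, hz⟩
      apply Subtype.ext
      show z + ((g' - g) / w j) • w + ((g - g') / w j) • w = z
      funext k
      show z k + ((g' - g) / w j) * w k + ((g - g') / w j) * w k = z k
      ring
    · rintro ⟨z, hz⟩
      apply Subtype.ext
      show z + ((g - g') / w j) • w + ((g' - g) / w j) • w = z
      funext k
      show z k + ((g - g') / w j) * w k + ((g' - g) / w j) * w k = z k
      ring

/-- For an ICSRI instance `(m,n,X,Z,f)` and a matrix `L` corresponding to a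
linear `(m,n,X,f)`-IC, every receiver `R i` gains no information about `x_j` for each
`j ∈ Z i` if and only if `C(L) ∩ F(X,Z) = ∅`, where
`F(X,Z) = ⋃_i {u + e_j : u ⊲ X i, j ∈ Z i}`. -/
theorem stmt_11 {F : Type} [Field F] [Fintype F] {m n N : ℕ}
    (X : Fin m → Set (Fin n)) (Z : Fin m → Set (Fin n)) (f : Fin m → Fin n)
    (hf : ∀ i, f i ∉ X i) (hZ : ∀ i, ∀ j ∈ Z i, j ∉ X i)
    (L : Matrix (Fin n) (Fin N) F)
    (hIC : ∀ i : Fin m, ∀ x x' : Fin n → F, Matrix.vecMul x L = Matrix.vecMul x' L →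
      (∀ j ∈ X i, x j = x' j) → x (f i) = x' (f i)) :
    (∀ i : Fin m, ∀ j ∈ Z i, ∀ x : Fin n → F, ∀ g g' : F,
      Nat.card {z : Fin n → F // Matrix.vecMul z L = Matrix.vecMul x L ∧
        (∀ ℓ ∈ X i, z ℓ = x ℓ) ∧ z j = g} =
      Nat.card {z : Fin n → F // Matrix.vecMul z L = Matrix.vecMul x L ∧
        (∀ ℓ ∈ X i, z ℓ = x ℓ) ∧ z j = g'}) ↔
    (Submodule.span F (Set.range fun c : Fin N => fun r : Fin n => L r c) : Set (Fin n → F)) ∩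
      {v : Fin n → F | ∃ i : Fin m, ∃ j ∈ Z i, ∃ u : Fin n → F,
        (∀ k, u k ≠ 0 → k ∈ X i) ∧ v = u + Pi.single j (1 : F)} = ∅ := by
  set C := Submodule.span F (Set.range fun c : Fin N => fun r : Fin n => L r c) with hC
  have hRHS : ((C : Set (Fin n → F)) ∩
      {v : Fin n → F | ∃ i : Fin m, ∃ j ∈ Z i, ∃ u : Fin n → F,
        (∀ k, u k ≠ 0 → k ∈ X i) ∧ v = u + Pi.single j (1 : F)} = ∅) ↔
      (∀ i : Fin m, ∀ j ∈ Z i, Pi.single j (1 : F) ∉ (C ⊔ suppSub F (X i))) := by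
    constructor
    · intro hmp i j hj hmem
      obtain ⟨c, hc, u, hu, hsum⟩ := Submodule.mem_sup.mp hmem
      have hcmem : c ∈ (C : Set (Fin n → F)) ∩
          {v : Fin n → F | ∃ i : Fin m, ∃ j ∈ Z i, ∃ u : Fin n → F,
            (∀ k, u k ≠ 0 → k ∈ X i) ∧ v = u + Pi.single j (1 : F)} := by
        refine ⟨hc, ⟨i, j, hj, -u, fun k hk => hu k (by simpa using hk), ?_⟩⟩
        rw [← hsum]
        abel
      rw [hmp] at hcmem
      exact hcmem
    · intro hnot
      ext v
      simp only [Set.mem_inter_iff, Set.mem_setOf_eq, Set.mem_empty_iff_false, iff_false,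
        not_and]
      rintro hv ⟨i, j, hj, u, hu, rfl⟩
      apply hnot i j hj
      apply Submodule.mem_sup.mpr
      refine ⟨u + Pi.single j 1, hv, -u, fun k hk => hu k (by simpa using hk), ?_⟩
      abel
  rw [hRHS]
  constructor
  · intro hL i j hj
    rw [← keyB]
    exact (keyA L (X i) j).mp (hL i j hj)
  · intro hR i j hj
    apply (keyA L (X i) j).mpr
    rw [keyB]
    exact hR i j hj
end

section
/- Let L be an n × N matrix over F and let δ ≥ 0 be an integer. Then L corresponds to a δ-error-correcting linear (m,n,X,f)-IC if and only if wt(zL) ≥ 2δ + 1 for every z ∈ F^n for which there exists i ∈ {1,…,m} with z_j = 0 for all j ∈ X_i and z_{f(i)} ≠ 0. -/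
/-- `L` corresponds to a `δ`-error-correcting linear `(m,n,X,f)`-IC iff
`wt(z * L) ≥ 2δ + 1` for every `z` vanishing on some `X i` with `z (f i) ≠ 0`. -/
theorem stmt_12 {F : Type} [Field F] {m n N : ℕ}
    (X : Fin m → Set (Fin n)) (f : Fin m → Fin n) (hf : ∀ i, f i ∉ X i)
    (L : Matrix (Fin n) (Fin N) F) (δ : ℕ) :
    (∀ i : Fin m, ∀ x x' : Fin n → F, ∀ ξ ξ' : Fin N → F,
      Set.ncard (Function.support ξ) ≤ δ → Set.ncard (Function.support ξ') ≤ δ →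
      Matrix.vecMul x L + ξ = Matrix.vecMul x' L + ξ' →
      (∀ j ∈ X i, x j = x' j) → x (f i) = x' (f i)) ↔
    (∀ z : Fin n → F, (∃ i : Fin m, (∀ j ∈ X i, z j = 0) ∧ z (f i) ≠ 0) →
      2 * δ + 1 ≤ Set.ncard (Function.support (Matrix.vecMul z L))) := by
  classical
  constructor
  · intro h z ⟨i, hz0, hzf⟩
    by_contra hlt
    push_neg at hlt
    set w := Matrix.vecMul z L with hw
    set T : Finset (Fin N) := (Function.support w).toFinset with hT
    have hTcard : T.card = Set.ncard (Function.support w) := by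
      rw [Set.ncard_eq_toFinset_card']
    have hT2δ : T.card ≤ 2 * δ := by omega
    obtain ⟨S, hS, hScard⟩ := Finset.exists_subset_card_eq
      (s := T) (n := min δ T.card) (min_le_right _ _)
    set ξ' : Fin N → F := fun k => if k ∈ S then w k else 0 with hξ'
    set ξ : Fin N → F := fun k => ξ' k - w k with hξ
    have hsupξ' : Function.support ξ' ⊆ (S : Set (Fin N)) := by
      intro k hk
      simp only [Function.mem_support, hξ'] at hk
      by_contra hkS
      rw [Finset.mem_coe] at hkS
      simp [hkS] at hk
    have hcξ' : Set.ncard (Function.support ξ') ≤ δ := by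
      calc Set.ncard (Function.support ξ') ≤ Set.ncard (S : Set (Fin N)) :=
            Set.ncard_le_ncard hsupξ' (Set.toFinite _)
        _ = S.card := by simp [Set.ncard_coe_finset]
        _ ≤ δ := by omega
    have hsupξ : Function.support ξ ⊆ ((T \ S : Finset (Fin N)) : Set (Fin N)) := by
      intro k hk
      simp only [Function.mem_support, hξ, hξ'] at hk
      by_cases hkS : k ∈ S
      · simp [hkS] at hk
      · by_cases hkT : k ∈ T
        · simp [Finset.mem_coe, Finset.mem_sdiff, hkT, hkS]
        · exfalso
          have : w k = 0 := by
            by_contra hne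
            exact hkT (by simp [hT, Function.mem_support, hne])
          simp [hkS, this] at hk
    have hcξ : Set.ncard (Function.support ξ) ≤ δ := by
      calc Set.ncard (Function.support ξ)
          ≤ Set.ncard ((T \ S : Finset (Fin N)) : Set (Fin N)) :=
            Set.ncard_le_ncard hsupξ (Set.toFinite _)
        _ = (T \ S).card := by rw [Set.ncard_coe_finset]
        _ = T.card - S.card := Finset.card_sdiff_of_subset hS
        _ ≤ δ := by omega
    have heq : Matrix.vecMul z L + ξ = Matrix.vecMul (0 : Fin n → F) L + ξ' := by
      funext k
      simp [hξ, Matrix.zero_vecMul, ← hw]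
    have := h i z 0 ξ ξ' hcξ hcξ' heq (fun j hj => by simp [hz0 j hj])
    exact hzf (by simpa using this)
  · intro h i x x' ξ ξ' hξ hξ' heq hside
    by_contra hne
    set z : Fin n → F := x - x' with hz
    have hkey := h z ⟨i, fun j hj => by simp [hz, sub_eq_zero, hside j hj],
      by simp [hz, sub_eq_zero]; exact hne⟩
    have hzL : Matrix.vecMul z L = ξ' - ξ := by
      have : Matrix.vecMul z L = Matrix.vecMul x L - Matrix.vecMul x' L := by
        rw [hz, Matrix.sub_vecMul]
      rw [this]
      funext k
      have := congrFun heq k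
      simp only [Pi.add_apply] at this
      simp only [Pi.sub_apply]
      linear_combination this
    have hsub : Function.support (Matrix.vecMul z L) ⊆
        Function.support ξ' ∪ Function.support ξ := by
      rw [hzL]; exact Function.support_sub ξ' ξ
    have : Set.ncard (Function.support (Matrix.vecMul z L)) ≤ 2 * δ := by
      calc Set.ncard (Function.support (Matrix.vecMul z L))
          ≤ Set.ncard (Function.support ξ' ∪ Function.support ξ) :=
            Set.ncard_le_ncard hsub (Set.toFinite _)
        _ ≤ Set.ncard (Function.support ξ') + Set.ncard (Function.support ξ) :=
            Set.ncard_union_le _ _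
        _ ≤ 2 * δ := by omega
    omega
end

section
/- Let L0 be an n × k matrix over F corresponding to a linear (m,n,X,f)-IC, and let M be a (k + μ) × N matrix over F such that wt(yM) ≥ 2δ + 1 for every nonzero y ∈ F^{k+μ}. Let P denote the submatrix formed by the first k rows of M and Q the submatrix formed by the last μ rows of M, and let L be the (n + μ) × N matrix whose first n rows form the matrix product L0·P and whose last μ rows form Q. Then L corresponds to a δ-error-correcting μ-randomized linear (m,n,X,f)-IC: for every i ∈ {1,…,m}, all x, x' ∈ F^n, g, g' ∈ F^μ, and all ξ, ξ' ∈ F^N of Hamming weight at most δ, if (x|g)L + ξ = (x'|g')L + ξ' and x_j = x'_j for all j ∈ X_i, then x_{f(i)} = x'_{f(i)}. -/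
/-- Construction A, error correction: If `L0` corresponds to a linear
`(m,n,X,f)`-IC, `M` is a `(k+μ) × N` matrix all of whose nonzero codewords `y * M` have
weight at least `2δ + 1`, `P` and `Q` are the submatrices of the first `k` and last `μ` rows
of `M`, and `L` is the `(n+μ) × N` matrix whose first `n` rows form `L0 * P` and whose last
`μ` rows form `Q`, then `L` corresponds to a `δ`-error-correcting `μ`-randomized linear
`(m,n,X,f)`-IC. -/
theorem stmt_17 {F : Type} [Field F] {m n k N μ δ : ℕ}
    (X : Fin m → Set (Fin n)) (f : Fin m → Fin n) (hf : ∀ i, f i ∉ X i)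
    (L0 : Matrix (Fin n) (Fin k) F)
    (hL0 : ∀ i : Fin m, ∀ x x' : Fin n → F,
      Matrix.vecMul x L0 = Matrix.vecMul x' L0 →
      (∀ j ∈ X i, x j = x' j) → x (f i) = x' (f i))
    (M : Matrix (Fin (k + μ)) (Fin N) F)
    (hM : ∀ y : Fin (k + μ) → F, y ≠ 0 →
      2 * δ + 1 ≤ Set.ncard (Function.support (Matrix.vecMul y M)))
    (P : Matrix (Fin k) (Fin N) F) (hP : ∀ i j, P i j = M (Fin.castAdd μ i) j)
    (Q : Matrix (Fin μ) (Fin N) F) (hQ : ∀ i j, Q i j = M (Fin.natAdd k i) j)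
    (L : Matrix (Fin (n + μ)) (Fin N) F)
    (hL1 : ∀ i j, L (Fin.castAdd μ i) j = (L0 * P) i j)
    (hL2 : ∀ i j, L (Fin.natAdd n i) j = Q i j) :
    ∀ i : Fin m, ∀ x x' : Fin n → F, ∀ g g' : Fin μ → F, ∀ ξ ξ' : Fin N → F,
      Set.ncard (Function.support ξ) ≤ δ → Set.ncard (Function.support ξ') ≤ δ →
      Matrix.vecMul (Fin.append x g) L + ξ = Matrix.vecMul (Fin.append x' g') L + ξ' →
      (∀ j ∈ X i, x j = x' j) → x (f i) = x' (f i) := by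
  intro i x x' g g' xi xi' hxi hxi' heq hside
  -- key: vecMul (append x g) L = vecMul (append (x ⬝ᵥ L0) g) M
  have key : ∀ (x : Fin n → F) (g : Fin μ → F),
      Matrix.vecMul (Fin.append x g) L
        = Matrix.vecMul (Fin.append (Matrix.vecMul x L0) g) M := by
    intro x g
    funext j
    simp only [Matrix.vecMul, dotProduct, Fin.sum_univ_add,
      Fin.append_left, Fin.append_right, hL1, hL2, hP, hQ, Matrix.mul_apply]
    congr 1
    simp_rw [Finset.mul_sum, Finset.sum_mul, mul_assoc]
    rw [Finset.sum_comm]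
  rw [key, key] at heq
  set u : Fin (k + μ) → F := Fin.append (Matrix.vecMul x L0) g with hu
  set v : Fin (k + μ) → F := Fin.append (Matrix.vecMul x' L0) g' with hv
  have hmul : Matrix.vecMul (u - v) M = xi' - xi := by
    rw [Matrix.sub_vecMul]
    have : Matrix.vecMul u M - Matrix.vecMul v M = xi' - xi := by
      have := heq
      funext j
      have hj := congrFun heq j
      simp only [Pi.add_apply] at hj
      simp only [Pi.sub_apply]
      linear_combination hj
    exact this
  have huv : u - v = 0 := by
    by_contra h
    have h1 := hM (u - v) h
    rw [hmul] at h1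
    have hsub : Function.support (xi' - xi) ⊆ Function.support xi' ∪ Function.support xi := by
      intro a ha
      simp only [Function.mem_support, Pi.sub_apply] at ha
      by_contra hc
      simp only [Set.mem_union, Function.mem_support, not_or, not_not] at hc
      rw [hc.1, hc.2, sub_zero] at ha
      exact ha rfl
    have h2 : Set.ncard (Function.support (xi' - xi))
        ≤ Set.ncard (Function.support xi' ∪ Function.support xi) :=
      Set.ncard_le_ncard hsub (Set.toFinite _)
    have h3 := Set.ncard_union_le (Function.support xi') (Function.support xi)
    omega
  have heq2 : u = v := sub_eq_zero.mp huv
  have hL0eq : Matrix.vecMul x L0 = Matrix.vecMul x' L0 := by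
    funext l
    have := congrFun heq2 (Fin.castAdd μ l)
    simpa [hu, hv, Fin.append_left] using this
  exact hL0 i x x' hL0eq hside
end

section
/- Let L0 be an n × k matrix over F, let P be a k × N matrix and Q a μ × N matrix over F, and let L be the (n + μ) × N matrix whose first n rows form the matrix product L0·P and whose last μ rows form Q. Suppose that every set of at most μ columns of Q is linearly independent (e.g., Q is a generator matrix of an [N, μ]-MDS code). Then for every W ⊆ {1,…,N} with |W| ≤ μ, every b ∈ F^W, and every x ∈ F^n, the number of g ∈ F^μ with ((x|g)L)_W = b equals q^{μ − |W|}. In particular, L is (μ,t)-strongly secure for every t: for every such W, every X_A ⊆ {1,…,n} with |X_A| = t, every b ∈ F^W, and all x, x' ∈ F^n agreeing on X_A, the number of g with ((x|g)L)_W = b equals the number of g with ((x'|g)L)_W = b. -/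
open Matrix

private lemma count_fiber {F : Type} [Field F] [Fintype F] {μ N : ℕ}
    (Q : Matrix (Fin μ) (Fin N) F)
    (W : Finset (Fin N))
    (hind : LinearIndependent F fun j : W => fun i : Fin μ => Q i (j : Fin N))
    (v : Fin N → F) :
    Nat.card {g : Fin μ → F // ∀ j ∈ W, Matrix.vecMul g Q j = v j} =
      Fintype.card F ^ (μ - W.card) := by
  classical
  set M : Matrix (Fin μ) W F := Matrix.of fun i (j : W) => Q i (j : Fin N) with hM
  have hinj : Function.Injective M.mulVec := by
    rw [Matrix.mulVec_injective_iff]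
    exact hind
  have hinj' : Function.Injective ⇑M.mulVecLin := hinj
  have hMrank : M.rank = W.card := by
    rw [Matrix.rank, LinearMap.finrank_range_of_inj hinj', Module.finrank_pi,
      Fintype.card_coe]
  have hrange : Module.finrank F (LinearMap.range M.vecMulLinear) = W.card := by
    have : LinearMap.range M.vecMulLinear = LinearMap.range Mᵀ.mulVecLin := by
      rw [Matrix.mulVecLin_transpose]
    rw [this]
    have := Matrix.rank_transpose M
    rw [Matrix.rank, Matrix.rank] at this
    rw [this, ← Matrix.rank, hMrank]
  have hsurj : Function.Surjective M.vecMulLinear := by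
    rw [← LinearMap.range_eq_top]
    apply Submodule.eq_top_of_finrank_eq
    rw [hrange, Module.finrank_pi, Fintype.card_coe]
  have hker : Nat.card (LinearMap.ker M.vecMulLinear) =
      Fintype.card F ^ (μ - W.card) := by
    rw [Nat.card_eq_fintype_card, Module.card_eq_pow_finrank (K := F)]
    congr 1
    have h1 := LinearMap.finrank_range_add_finrank_ker M.vecMulLinear
    have h2 : Module.finrank F (Fin μ → F) = μ := by
      rw [Module.finrank_pi, Fintype.card_fin]
    omega
  set w : W → F := fun j => v j with hw
  obtain ⟨g0, hg0⟩ := hsurj w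
  have hcond : ∀ g : Fin μ → F,
      (∀ j ∈ W, Matrix.vecMul g Q j = v j) ↔ M.vecMulLinear g = w := by
    intro g
    constructor
    · intro h
      funext j
      have := h j j.2
      simpa [M, Matrix.vecMul, dotProduct] using this
    · intro h j hj
      have := congr_fun h ⟨j, hj⟩
      simpa [M, Matrix.vecMul, dotProduct] using this
  rw [← hker]
  apply Nat.card_congr
  refine (Equiv.subtypeEquivRight hcond).trans ?_
  exact
    { toFun := fun g => ⟨g.1 - g0, by
        simp [LinearMap.mem_ker, map_sub, g.2, hg0]⟩
      invFun := fun k => ⟨k.1 + g0, by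
        have := LinearMap.mem_ker.mp k.2
        simp [map_add, this, hg0]⟩
      left_inv := fun g => by ext1; simp
      right_inv := fun k => by ext1; simp }

/-- Construction A, strong security: If the last `μ` rows of `L` form a matrix
`Q` any `≤ μ` columns of which are linearly independent, and the first `n` rows of `L` form
`L0 * P`, then for every window `W` of at most `μ` transmissions, every prescribed value `b`
on `W` and every message vector `x`, exactly `q^(μ - |W|)` random vectors `g` are consistent;
in particular `L` is `(μ,t)`-strongly secure for every `t`. -/
theorem stmt_18 {F : Type} [Field F] [Fintype F] {n k N μ : ℕ}
    (L0 : Matrix (Fin n) (Fin k) F)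
    (P : Matrix (Fin k) (Fin N) F) (Q : Matrix (Fin μ) (Fin N) F)
    (hQ : ∀ s : Finset (Fin N), s.card ≤ μ →
      LinearIndependent F fun j : s => fun i : Fin μ => Q i (j : Fin N))
    (L : Matrix (Fin (n + μ)) (Fin N) F)
    (hL1 : ∀ i j, L (Fin.castAdd μ i) j = (L0 * P) i j)
    (hL2 : ∀ i j, L (Fin.natAdd n i) j = Q i j) :
    (∀ W : Finset (Fin N), W.card ≤ μ → ∀ b : Fin N → F, ∀ x : Fin n → F,
      Nat.card {g : Fin μ → F // ∀ j ∈ W, Matrix.vecMul (Fin.append x g) L j = b j} =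
        Fintype.card F ^ (μ - W.card)) ∧
    (∀ t : ℕ, ∀ W : Finset (Fin N), W.card ≤ μ → ∀ XA : Set (Fin n), XA.ncard = t →
      ∀ b : Fin N → F, ∀ x x' : Fin n → F, (∀ j ∈ XA, x j = x' j) →
        Nat.card {g : Fin μ → F // ∀ j ∈ W, Matrix.vecMul (Fin.append x g) L j = b j} =
        Nat.card {g : Fin μ → F // ∀ j ∈ W, Matrix.vecMul (Fin.append x' g) L j = b j}) := by
  have hsplit : ∀ (x : Fin n → F) (g : Fin μ → F) (j : Fin N),
      Matrix.vecMul (Fin.append x g) L j =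
        Matrix.vecMul x (L0 * P) j + Matrix.vecMul g Q j := by
    intro x g j
    simp only [Matrix.vecMul, dotProduct]
    rw [Fin.sum_univ_add]
    congr 1
    · exact Finset.sum_congr rfl fun i _ => by rw [Fin.append_left, hL1]
    · exact Finset.sum_congr rfl fun i _ => by rw [Fin.append_right, hL2]
  have key : ∀ W : Finset (Fin N), W.card ≤ μ → ∀ b : Fin N → F, ∀ x : Fin n → F,
      Nat.card {g : Fin μ → F // ∀ j ∈ W, Matrix.vecMul (Fin.append x g) L j = b j} =
        Fintype.card F ^ (μ - W.card) := by
    intro W hW b x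
    have := count_fiber Q W (hQ W hW)
      (fun j => b j - Matrix.vecMul x (L0 * P) j)
    rw [← this]
    apply Nat.card_congr
    apply Equiv.subtypeEquivRight
    intro g
    constructor <;> intro h j hj <;> have h' := h j hj <;> rw [hsplit] at * <;>
      first
        | (rw [eq_sub_iff_add_eq, add_comm]; exact h')
        | (rw [eq_sub_iff_add_eq, add_comm] at h'; exact h')
  exact ⟨key, fun t W hW XA hXA b x x' _ => by rw [key W hW b x, key W hW b x']⟩
end

section
/- Suppose there exists an n × k matrix L0 over F corresponding to a linear (m,n,X,f)-IC, let μ, δ ≥ 0 be integers, set N = k + μ + 2δ, and suppose q ≥ N + 1. Then there exists an (n + μ) × N matrix L over F such that: (i) for every i ∈ {1,…,m}, all x, x' ∈ F^n, g, g' ∈ F^μ, and all ξ, ξ' ∈ F^N of Hamming weight at most δ, if (x|g)L + ξ = (x'|g')L + ξ' and x_j = x'_j for all j ∈ X_i, then x_{f(i)} = x'_{f(i)}; and (ii) for every W ⊆ {1,…,N} with |W| ≤ μ, every b ∈ F^W, and every x ∈ F^n, the number of g ∈ F^μ with ((x|g)L)_W = b equals q^{μ − |W|}. (Thus for q ≥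 κ_q + μ + 2δ + 1 there exists a (μ,t,δ)-strongly secure μ-randomized linear (m,n,X,f)-IC of length κ_q + μ + 2δ, which is optimal.) -/
/-!
Choose distinct nonzero points `α₀, …, α_{N-1}` of `F` (possible as `N < q`) and let `L` map
`(x | g)` to the values at the `α j` of the polynomial with coefficient vector `(x L0 | g)`,
of degree `< k + μ`. This is a Reed–Solomon code of length `N = k + μ + 2δ`, so of minimum
distance `2δ + 1`: transmissions that agree up to two errors of weight `≤ δ` come from the same
coefficient vector, hence from the same `x L0`, and decoding is then that of `L0`.
For secrecy, the `g`-dependent part of the transmission at `j` is `α j ^ k * ∑ t, g t * α j ^ t`;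
Lagrange interpolation makes it take every prescribed value on any `|W| ≤ μ` positions, and the
fibres of this surjective linear map are cosets of a kernel of dimension `μ - |W|`.
-/

open Polynomial Matrix Module

theorem LinearMap.natCard_fiber_of_surjective {K V V' : Type*} [Field K] [AddCommGroup V]
    [Module K V] [FiniteDimensional K V] [AddCommGroup V'] [Module K V'] (φ : V →ₗ[K] V')
    (hφ : Function.Surjective φ) (w : V') :
    Nat.card {v // φ v = w} = Nat.card K ^ (finrank K V - finrank K V') := by
  obtain ⟨v₀, rfl⟩ := hφ w
  have e : {v // φ v = φ v₀} ≃ ker φ :=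
    { toFun := fun v => ⟨v - v₀, by simp [v.2]⟩
      invFun := fun v => ⟨v + v₀, by simp [mem_ker.1 v.2]⟩
      left_inv := fun v => by simp
      right_inv := fun v => by simp }
  have hrank := finrank_range_add_finrank_ker φ
  rw [range_eq_top.2 hφ, finrank_top] at hrank
  rw [Nat.card_congr e, Module.natCard_eq_pow_finrank (K := K)]
  congr 1
  omega

namespace Matrix

section Semiring

variable {R ι : Type*}

def appendRows {a b : ℕ} (A : Matrix (Fin a) ι R) (B : Matrix (Fin b) ι R) :
    Matrix (Fin (a + b)) ι R :=
  of fun p j => Fin.append (fun s => A s j) (fun t => B t j) p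

theorem vecMul_appendRows [NonUnitalNonAssocSemiring R] {a b : ℕ} (x : Fin a → R)
    (y : Fin b → R) (A : Matrix (Fin a) ι R) (B : Matrix (Fin b) ι R) :
    Fin.append x y ᵥ* appendRows A B = x ᵥ* A + y ᵥ* B := by
  ext j
  simp [appendRows, vecMul, dotProduct, Fin.sum_univ_add]

/-- The generator matrix of the Reed–Solomon code with evaluation points `α`. -/
def powerMatrix [Monoid R] (M : ℕ) (α : ι → R) : Matrix (Fin M) ι R :=
  of fun s j => α j ^ (s : ℕ)

theorem powerMatrix_add [CommSemiring R] [Fintype ι] [DecidableEq ι] (a b : ℕ) (α : ι → R) :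
    powerMatrix (a + b) α =
      appendRows (powerMatrix a α) (powerMatrix b α * diagonal fun j => α j ^ a) := by
  ext p j
  refine Fin.addCases (fun s => ?_) (fun t => ?_) p <;>
    simp [appendRows, powerMatrix, pow_add, mul_comm]

end Semiring

variable {F ι : Type*} [Field F]

theorem eq_zero_of_vecMul_powerMatrix_eq_zero_on {M : ℕ} {α : ι → F} {S : Finset ι}
    (hα : Set.InjOn α S) (hS : M ≤ S.card) {c : Fin M → F}
    (hc : ∀ j ∈ S, (c ᵥ* powerMatrix M α) j = 0) : c = 0 := by
  obtain ⟨e⟩ : Nonempty (Fin M ↪ S) :=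
    Function.Embedding.nonempty_of_card_le (by simpa using hS)
  have hv : Function.Injective fun i => α (e i) := fun i i' h =>
    e.injective (Subtype.ext (hα (e i).2 (e i').2 h))
  refine eq_zero_of_mulVec_eq_zero (det_vandermonde_ne_zero_iff.2 hv) (funext fun i => ?_)
  simpa [vandermonde, mulVec, vecMul, dotProduct, powerMatrix, mul_comm] using hc _ (e i).2

theorem exists_vecMul_powerMatrix_eq_on [DecidableEq ι] {M : ℕ} {α : ι → F} {W : Finset ι}
    (hα : Set.InjOn α W) (hW : W.card ≤ M) (r : ι → F) :
    ∃ c : Fin M → F, ∀ j ∈ W, (c ᵥ* powerMatrix M α) j = r j := by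
  set p := Lagrange.interpolate W α r
  refine ⟨fun s => p.coeff s, fun j hj => ?_⟩
  rw [← Lagrange.eval_interpolate_at_node r hα hj]
  rcases eq_or_ne p 0 with hp | hp
  · simp [p, hp, vecMul, dotProduct]
  have hdeg : p.natDegree < M := (natDegree_lt_iff_degree_lt hp).2 <|
    (Lagrange.degree_interpolate_lt r hα).trans_le (by exact_mod_cast hW)
  rw [eval_eq_sum_range' hdeg, ← Fin.sum_univ_eq_sum_range]
  simp [vecMul, dotProduct, powerMatrix]

theorem exists_vecMul_mul_diagonal_eq_on [Fintype ι] [DecidableEq ι] {κ : Type*} [Fintype κ]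
    {B : Matrix κ ι F} {W : Finset ι} (hB : ∀ r : ι → F, ∃ g, ∀ j ∈ W, (g ᵥ* B) j = r j)
    {w : ι → F} (hw : ∀ j ∈ W, w j ≠ 0) (r : ι → F) :
    ∃ g, ∀ j ∈ W, (g ᵥ* (B * diagonal w)) j = r j := by
  obtain ⟨g, hg⟩ := hB (r / w)
  refine ⟨g, fun j hj => ?_⟩
  rw [← vecMul_vecMul, vecMul_diagonal, hg j hj, Pi.div_apply, div_mul_cancel₀ _ (hw j hj)]

theorem natCard_vecMul_eq_on {κ : Type*} [Fintype κ] (B : Matrix κ ι F) {W : Finset ι}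
    (hB : ∀ r : ι → F, ∃ g, ∀ j ∈ W, (g ᵥ* B) j = r j) (b : ι → F) :
    Nat.card {g : κ → F // ∀ j ∈ W, (g ᵥ* B) j = b j} =
      Nat.card F ^ (Fintype.card κ - W.card) := by
  classical
  set φ := LinearMap.funLeft F F ((↑) : W → ι) ∘ₗ B.vecMulLinear
  have hφ : Function.Surjective φ := fun r => by
    obtain ⟨g, hg⟩ := hB fun j => if hj : j ∈ W then r ⟨j, hj⟩ else 0
    exact ⟨g, funext fun j => by simpa [φ, LinearMap.funLeft] using hg j j.2⟩
  have e : {g : κ → F // ∀ j ∈ W, (g ᵥ* B) j = b j} ≃ {g // φ g = fun j : W => b j} :=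
    Equiv.subtypeEquivRight fun g => by simp [φ, funext_iff, LinearMap.funLeft]
  rw [Nat.card_congr e, φ.natCard_fiber_of_surjective hφ, finrank_fintype_fun_eq_card,
    finrank_fintype_fun_eq_card, Fintype.card_coe]

theorem eq_of_vecMul_powerMatrix_add_eq [Fintype ι] {M δ : ℕ} {α : ι → F}
    (hα : Function.Injective α) (hcard : M + 2 * δ ≤ Fintype.card ι) {c c' : Fin M → F}
    {ξ ξ' : ι → F} (hξ : (Function.support ξ).ncard ≤ δ) (hξ' : (Function.support ξ').ncard ≤ δ)
    (h : c ᵥ* powerMatrix M α + ξ = c' ᵥ* powerMatrix M α + ξ') : c = c' := by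
  classical
  set S := (Function.support ξ ∪ Function.support ξ').toFinsetᶜ
  have hS : M ≤ S.card := by
    rw [Finset.card_compl, ← Set.ncard_eq_toFinset_card']
    have := Set.ncard_union_le (Function.support ξ) (Function.support ξ')
    omega
  rw [← sub_eq_zero]
  refine eq_zero_of_vecMul_powerMatrix_eq_zero_on hα.injOn hS fun j hj => ?_
  simp only [S, Finset.mem_compl, Set.mem_toFinset, Set.mem_union, Function.mem_support,
    not_or, not_not] at hj
  simpa [sub_vecMul, hj, sub_eq_zero] using congrFun h j

end Matrix

theorem stmt_19_general {F : Type} [Field F] [Fintype F] {m n k μ δ : ℕ}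
    (X : Fin m → Set (Fin n)) (f : Fin m → Fin n)
    (L0 : Matrix (Fin n) (Fin k) F)
    (hL0 : ∀ i : Fin m, ∀ x x' : Fin n → F,
      Matrix.vecMul x L0 = Matrix.vecMul x' L0 →
      (∀ j ∈ X i, x j = x' j) → x (f i) = x' (f i))
    (hq : k + μ + 2 * δ + 1 ≤ Fintype.card F) :
    ∃ L : Matrix (Fin (n + μ)) (Fin (k + μ + 2 * δ)) F,
      (∀ i : Fin m, ∀ x x' : Fin n → F, ∀ g g' : Fin μ → F,
        ∀ ξ ξ' : Fin (k + μ + 2 * δ) → F,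
        Set.ncard (Function.support ξ) ≤ δ → Set.ncard (Function.support ξ') ≤ δ →
        Matrix.vecMul (Fin.append x g) L + ξ = Matrix.vecMul (Fin.append x' g') L + ξ' →
        (∀ j ∈ X i, x j = x' j) → x (f i) = x' (f i)) ∧
      (∀ W : Finset (Fin (k + μ + 2 * δ)), W.card ≤ μ →
        ∀ b : Fin (k + μ + 2 * δ) → F, ∀ x : Fin n → F,
        Nat.card {g : Fin μ → F // ∀ j ∈ W, Matrix.vecMul (Fin.append x g) L j = b j} =
          Fintype.card F ^ (μ - W.card)) := by
  classical
  obtain ⟨e⟩ : Nonempty (Fin (k + μ + 2 * δ) ↪ Fˣ) :=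
    Function.Embedding.nonempty_of_card_le (by rw [Fintype.card_fin, Fintype.card_units]; omega)
  set α : Fin (k + μ + 2 * δ) → F := fun j => e j
  have hα : Function.Injective α := fun a b h => e.injective (Units.ext h)
  set B := powerMatrix μ α * diagonal fun j => α j ^ k
  have hcode : ∀ x g, Fin.append x g ᵥ* appendRows (L0 * powerMatrix k α) B =
      Fin.append (x ᵥ* L0) g ᵥ* powerMatrix (k + μ) α := fun x g => by
    rw [powerMatrix_add, vecMul_appendRows, vecMul_appendRows, vecMul_vecMul]
  refine ⟨appendRows (L0 * powerMatrix k α) B, ?_, ?_⟩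
  · intro i x x' g g' ξ ξ' hξ hξ' h hX
    rw [hcode, hcode] at h
    have hxg := eq_of_vecMul_powerMatrix_add_eq hα (by simp) hξ hξ' h
    refine hL0 i x x' (funext fun s => ?_) hX
    simpa using congrFun hxg (Fin.castAdd μ s)
  · intro W hW b x
    have hB := exists_vecMul_mul_diagonal_eq_on (exists_vecMul_powerMatrix_eq_on hα.injOn hW)
      fun j _ => pow_ne_zero k (e j).ne_zero
    simp_rw [vecMul_appendRows, Pi.add_apply, ← eq_sub_iff_add_eq']
    rw [natCard_vecMul_eq_on B hB, Nat.card_eq_fintype_card, Fintype.card_fin]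

/-- If there exists a linear `(m,n,X,f)`-IC of length `k` over `F` and
`q ≥ k + μ + 2δ + 1`, then there exists an `(n+μ) × (k+μ+2δ)` matrix `L` which is (i) a
`δ`-error-correcting `μ`-randomized linear `(m,n,X,f)`-IC and (ii) `(μ,t)`-strongly secure
for every `t`: for every window `W` of at most `μ` transmissions, every prescribed value on
`W` and every message vector, exactly `q^(μ - |W|)` random vectors are consistent. Thus for
`q ≥ κ_q + μ + 2δ + 1` there is an optimal `(μ,t,δ)`-strongly secure `μ`-randomized linear
`(m,n,X,f)`-IC of length `κ_q + μ + 2δ`. -/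
theorem stmt_19 {F : Type} [Field F] [Fintype F] {m n k μ δ : ℕ}
    (X : Fin m → Set (Fin n)) (f : Fin m → Fin n) (hf : ∀ i, f i ∉ X i)
    (L0 : Matrix (Fin n) (Fin k) F)
    (hL0 : ∀ i : Fin m, ∀ x x' : Fin n → F,
      Matrix.vecMul x L0 = Matrix.vecMul x' L0 →
      (∀ j ∈ X i, x j = x' j) → x (f i) = x' (f i))
    (hq : k + μ + 2 * δ + 1 ≤ Fintype.card F) :
    ∃ L : Matrix (Fin (n + μ)) (Fin (k + μ + 2 * δ)) F,
      (∀ i : Fin m, ∀ x x' : Fin n → F, ∀ g g' : Fin μ → F,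
        ∀ ξ ξ' : Fin (k + μ + 2 * δ) → F,
        Set.ncard (Function.support ξ) ≤ δ → Set.ncard (Function.support ξ') ≤ δ →
        Matrix.vecMul (Fin.append x g) L + ξ = Matrix.vecMul (Fin.append x' g') L + ξ' →
        (∀ j ∈ X i, x j = x' j) → x (f i) = x' (f i)) ∧
      (∀ W : Finset (Fin (k + μ + 2 * δ)), W.card ≤ μ →
        ∀ b : Fin (k + μ + 2 * δ) → F, ∀ x : Fin n → F,
        Nat.card {g : Fin μ → F // ∀ j ∈ W, Matrix.vecMul (Fin.append x g) L j = b j} =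
          Fintype.card F ^ (μ - W.card)) :=
  stmt_19_general X f L0 hL0 hq
end
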